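/- arXiv:2010.07357 — 4 statements merged into one kernel-verified Lean document; each statement's English description precedes it below -/
import Mathlib

section
/- With f_{i,j} and g_{i,j} as defined in the context, Σ_{u ∈ W_N} det[f_{i,j}(u_j)]_{1≤i,j≤N} · det[g_{j,i}(−u_j)]_{1≤i,j≤N} = Σ_{u ∈ W_N} det[f_{i,0}(u_j)]_{1≤i,j≤N} · det[g_{0,i}(−u_j)]_{1≤i,j≤N}, where in the second determinant on each side the (i,j) entry is g_{j,i}(−u_j) (respectively g_{0,i}(−u_j)). Both sums have only finitely many nonzero terms. -/
/-- `f_{i,j}(u)` of Lemma 2.3: a contour integral over `|z| = R₁`. -/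
noncomputable def fInt (a b : ℕ → ℝ) (x : ℕ → ℤ) (m : ℕ) (R₁ : ℝ)
    (i j : ℕ) (u : ℤ) : ℂ :=
  (2 * (Real.pi : ℂ) * Complex.I)⁻¹ *
    ∮ z in C(0, R₁),
      z⁻¹ * z ^ u * (z * (b i : ℂ)) ^ (-(x i))
        * ((∏ k ∈ Finset.Icc 1 j, (z - ((b k : ℂ))⁻¹))
            / ∏ k ∈ Finset.Icc 1 i, (z - ((b k : ℂ))⁻¹))
        * ∏ k ∈ Finset.Icc 1 (m - 1), (1 - (a k : ℂ) / z)⁻¹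

/-- `g_{i,j}(u)` of Lemma 2.3: a contour integral over `|w| = R₂`. -/
noncomputable def gInt (a b : ℕ → ℝ) (y : ℕ → ℤ) (m : ℕ) (R₂ : ℝ)
    (i j : ℕ) (u : ℤ) : ℂ :=
  (2 * (Real.pi : ℂ) * Complex.I)⁻¹ *
    ∮ w in C(0, R₂),
      w ^ u * (w * (b j : ℂ)) ^ (y j)
        * ((∏ k ∈ Finset.Icc 1 j, (w - ((b k : ℂ))⁻¹))
            / ∏ k ∈ Finset.Icc 1 i, (w - ((b k : ℂ))⁻¹))
        * (w - (a m : ℂ))⁻¹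

/-!
Since `f_{i,σ}(u) = f_{i,σ-1}(u+1) - f_{i,σ-1}(u) / b_σ` and
`g_{σ-1,i}(u) = g_{σ,i}(u+1) - g_{σ,i}(u) / b_σ` (split off the factor `z - 1/b_σ` in the contour
integrals), lowering the superscript of column `j` in the first determinant and of the matching
entry in the second is a summation by parts in `u_j`. Its boundary terms vanish: at the boundary of
`W_N` the entry `u_j` equals a neighbouring entry, and along a suitable path of superscript patterns
from `(1, …, N)` to `(0, …, 0)` the corresponding two columns of one determinant then coincide.
The sums are finite because, after the inversion `z ↦ 1/z` of the contour, `f_{i,σ}(u)` and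
`g_{σ,i}(u)` vanish by Cauchy's theorem for small `u`.
-/

open Function

section MonotoneShift

variable {ι : Type*} [PartialOrder ι] [DecidableEq ι] {v : ι → ℤ} {j : ι}

theorem Monotone.sub_single_one [IsStronglyCoatomic ι] (hv : Monotone v)
    (hj : ∀ k, k ⋖ j → v k ≠ v j) : Monotone (v - Pi.single j 1) := by
  intro k l hkl
  simp only [Pi.sub_apply, Pi.single_apply]
  split_ifs with hk hl hl
  · subst hk hl; rfl
  · linarith [hv hkl]
  · subst hl
    obtain ⟨x, hkx, hxj⟩ := exists_le_covBy_of_lt (lt_of_le_of_ne hkl hk)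
    have := lt_of_le_of_ne (hv hxj.le) (hj x hxj)
    linarith [hv hkx]
  · linarith [hv hkl]

theorem Monotone.add_single_one [IsStronglyAtomic ι] (hv : Monotone v)
    (hj : ∀ l, j ⋖ l → v j ≠ v l) : Monotone (v + Pi.single j 1) := by
  intro k l hkl
  simp only [Pi.add_apply, Pi.single_apply]
  split_ifs with hk hl hl
  · subst hk hl; rfl
  · subst hk
    obtain ⟨x, hjx, hxl⟩ := exists_covBy_le_of_lt (lt_of_le_of_ne hkl (Ne.symm hl))
    have := lt_of_le_of_ne (hv hjx.le) (hj x hjx)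
    linarith [hv hxl]
  · linarith [hv hkl]
  · linarith [hv hkl]

end MonotoneShift

section ColumnDeterminant

variable {N : ℕ}

def colDet (P : Fin N → ℤ → Fin N → ℂ) (u : Fin N → ℤ) : ℂ :=
  (Matrix.of fun i k => P k (u k) i).det

theorem colDet_eq_zero_of_column_eq_zero {P : Fin N → ℤ → Fin N → ℂ} {u : Fin N → ℤ} {k : Fin N}
    (h : P k (u k) = 0) : colDet P u = 0 :=
  Matrix.det_eq_zero_of_column_eq_zero k fun i => congrFun h i

theorem colDet_eq_zero_of_column_eq {P : Fin N → ℤ → Fin N → ℂ} {u : Fin N → ℤ} {k l : Fin N}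
    (hkl : k ≠ l) (h : P k (u k) = P l (u l)) : colDet P u = 0 :=
  Matrix.det_zero_of_column_eq hkl fun i => congrFun h i

theorem colDet_eq_sub_of_column_eq {P : Fin N → ℤ → Fin N → ℂ} {j : Fin N}
    {Q : ℤ → Fin N → ℂ} {c : ℂ} {d : ℤ} (hP : ∀ t, P j t = Q (t + d) - c • Q t)
    (u : Fin N → ℤ) :
    colDet P u = colDet (update P j Q) (u + Pi.single j d) - c * colDet (update P j Q) u := by
  set M : Matrix (Fin N) (Fin N) ℂ := Matrix.of fun i k => update P j Q k (u k) i
  have hcol : ∀ w : Fin N → ℤ, (∀ k, k ≠ j → w k = u k) →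
      (Matrix.of fun i k => update P j Q k (w k) i) = M.updateCol j (Q (w j)) := by
    intro w hw
    ext i k
    by_cases hk : k = j
    · subst hk; simp
    · simp [M, hk, hw k hk]
  have hP' : (Matrix.of fun i k => P k (u k) i) = M.updateCol j (P j (u j)) := by
    ext i k
    by_cases hk : k = j
    · subst hk; simp
    · simp [M, hk]
  unfold colDet
  rw [hP', hcol _ (fun k hk => by simp [hk]), hcol u (fun _ _ => rfl), hP,
    sub_eq_add_neg, ← neg_smul, Matrix.det_updateCol_add, Matrix.det_updateCol_smul]
  simp [sub_eq_add_neg]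

end ColumnDeterminant

theorem tsum_monotone_mul_shift {ι : Type*} [Preorder ι] {A B : (ι → ℤ) → ℂ} (e : ι → ℤ)
    (hA : ∀ v, Monotone v → ¬ Monotone (v - e) → A v = 0)
    (hB : ∀ w, Monotone w → ¬ Monotone (w + e) → B w = 0) :
    ∑' u : {u : ι → ℤ // Monotone u}, A (u + e) * B u
      = ∑' v : {v : ι → ℤ // Monotone v}, A v * B (v - e) := by
  refine (tsum_subtype {u | Monotone u} fun u => A (u + e) * B u).trans <|
    .trans ?_ (tsum_subtype {v | Monotone v} fun v => A v * B (v - e)).symm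
  rw [← (Equiv.subRight e).tsum_eq]
  refine tsum_congr fun v => ?_
  rw [Equiv.subRight_apply]
  by_cases hv : Monotone v <;> by_cases hv' : Monotone (v - e)
  · rw [Set.indicator_of_mem hv', Set.indicator_of_mem hv, sub_add_cancel]
  · rw [Set.indicator_of_notMem hv', Set.indicator_of_mem hv, hA v hv hv', zero_mul]
  · rw [Set.indicator_of_mem hv', Set.indicator_of_notMem hv, sub_add_cancel,
      hB _ hv' (by rwa [sub_add_cancel]), mul_zero]
  · rw [Set.indicator_of_notMem hv', Set.indicator_of_notMem hv]

theorem summable_of_forall_mem_Icc {ι : Type*} [Fintype ι] [DecidableEq ι] {f : (ι → ℤ) → ℂ}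
    {α β : ℤ} (hf : ∀ u, f u ≠ 0 → ∀ k, u k ∈ Set.Icc α β) : Summable f :=
  summable_of_ne_finset_zero (s := Fintype.piFinset fun _ => Finset.Icc α β) fun u hu => by
    by_contra h
    exact hu (Fintype.mem_piFinset.2 fun k => Finset.mem_Icc.2 (hf u h k))

section SummationByParts

variable {N : ℕ} {F G : ℕ → ℕ → ℤ → ℂ} {c : ℕ → ℂ} {α β : ℤ}

structure IsSummationByPartsPair (N : ℕ) (F G : ℕ → ℕ → ℤ → ℂ) (c : ℕ → ℂ) (α β : ℤ) :
    Prop where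
  f_succ : ∀ i σ u, 1 ≤ i → i ≤ N → σ < N →
    F i (σ + 1) u = F i σ (u + 1) - c (σ + 1) * F i σ u
  g_eq_sub : ∀ σ i u, σ < N → 1 ≤ i → i ≤ N →
    G σ i u = G (σ + 1) i (u + 1) - c (σ + 1) * G (σ + 1) i u
  f_eq_zero : ∀ i σ u, 1 ≤ i → i ≤ N → σ ≤ N → u ≤ α → F i σ u = 0
  g_eq_zero : ∀ σ i u, σ ≤ N → 1 ≤ i → i ≤ N → u ≤ β → G σ i u = 0

def fCols (F : ℕ → ℕ → ℤ → ℂ) (σ : Fin N → ℕ) : Fin N → ℤ → Fin N → ℂ :=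
  fun k t i => F (i + 1) (σ k) t

def gCols (G : ℕ → ℕ → ℤ → ℂ) (σ : Fin N → ℕ) : Fin N → ℤ → Fin N → ℂ :=
  fun k t i => G (σ k) (i + 1) (-t)

theorem fCols_update (σ : Fin N → ℕ) (j : Fin N) (s : ℕ) :
    fCols F (update σ j s) = update (fCols F σ) j (fun t i => F (i + 1) s t) := by
  funext k t i
  by_cases hk : k = j
  · subst hk; simp [fCols]
  · simp [fCols, hk]

theorem gCols_update (σ : Fin N → ℕ) (j : Fin N) (s : ℕ) :
    gCols G (update σ j s) = update (gCols G σ) j (fun t i => G s (i + 1) (-t)) := by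
  funext k t i
  by_cases hk : k = j
  · subst hk; simp [gCols]
  · simp [gCols, hk]

noncomputable def sbpSum (F G : ℕ → ℕ → ℤ → ℂ) (σ : Fin N → ℕ) : ℂ :=
  ∑' u : {u : Fin N → ℤ // Monotone u}, colDet (fCols F σ) u * colDet (gCols G σ) u

namespace IsSummationByPartsPair

variable {σ : Fin N → ℕ}

theorem lt_of_colDet_fCols_ne_zero (h : IsSummationByPartsPair N F G c α β)
    (hσ : ∀ k, σ k ≤ N) {u : Fin N → ℤ} (hu : colDet (fCols F σ) u ≠ 0) (k : Fin N) :
    α < u k := by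
  by_contra hk
  exact hu (colDet_eq_zero_of_column_eq_zero (k := k) (funext fun i =>
    h.f_eq_zero _ _ _ (Nat.le_add_left 1 i) i.2 (hσ k) (not_lt.1 hk)))

theorem lt_of_colDet_gCols_ne_zero (h : IsSummationByPartsPair N F G c α β)
    (hσ : ∀ k, σ k ≤ N) {u : Fin N → ℤ} (hu : colDet (gCols G σ) u ≠ 0) (k : Fin N) :
    u k < -β := by
  by_contra hk
  exact hu (colDet_eq_zero_of_column_eq_zero (k := k) (funext fun i =>
    h.g_eq_zero _ _ _ (hσ k) (Nat.le_add_left 1 i) i.2 (by omega)))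

theorem summable_colDet_mul_colDet (h : IsSummationByPartsPair N F G c α β)
    {σ₁ σ₂ : Fin N → ℕ} (hσ₁ : ∀ k, σ₁ k ≤ N) (hσ₂ : ∀ k, σ₂ k ≤ N) {d₁ d₂ : Fin N → ℤ}
    (hd₁ : ∀ k, d₁ k ≤ 1) (hd₂ : ∀ k, -1 ≤ d₂ k) :
    Summable fun u : {u : Fin N → ℤ // Monotone u} =>
      colDet (fCols F σ₁) (u + d₁) * colDet (gCols G σ₂) (u + d₂) := by
  refine (summable_of_forall_mem_Icc (α := α - 1) (β := -β + 1)
    (f := fun u => colDet (fCols F σ₁) (u + d₁) * colDet (gCols G σ₂) (u + d₂))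
    fun u hu k => ?_).subtype Monotone
  have h₁ := h.lt_of_colDet_fCols_ne_zero hσ₁ (left_ne_zero_of_mul hu) k
  have h₂ := h.lt_of_colDet_gCols_ne_zero hσ₂ (right_ne_zero_of_mul hu) k
  rw [Pi.add_apply] at h₁ h₂
  exact ⟨by linarith [hd₁ k], by linarith [hd₂ k]⟩

theorem colDet_fCols_eq_sub (h : IsSummationByPartsPair N F G c α β) {j : Fin N}
    (hj : 1 ≤ σ j) (hjN : σ j ≤ N) (u : Fin N → ℤ) :
    colDet (fCols F σ) u = colDet (fCols F (update σ j (σ j - 1))) (u + Pi.single j 1)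
      - c (σ j) * colDet (fCols F (update σ j (σ j - 1))) u := by
  have hsucc : σ j - 1 + 1 = σ j := Nat.sub_add_cancel hj
  rw [fCols_update]
  refine colDet_eq_sub_of_column_eq (fun t => funext fun i => ?_) u
  simpa only [fCols, hsucc, Pi.sub_apply, Pi.smul_apply, smul_eq_mul] using
    h.f_succ (i + 1) (σ j - 1) t (Nat.le_add_left 1 i) i.2 (by omega)

theorem colDet_gCols_update_eq_sub (h : IsSummationByPartsPair N F G c α β) {j : Fin N}
    (hj : 1 ≤ σ j) (hjN : σ j ≤ N) (v : Fin N → ℤ) :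
    colDet (gCols G (update σ j (σ j - 1))) v
      = colDet (gCols G σ) (v - Pi.single j 1) - c (σ j) * colDet (gCols G σ) v := by
  have hsucc : σ j - 1 + 1 = σ j := Nat.sub_add_cancel hj
  have := colDet_eq_sub_of_column_eq (P := gCols G (update σ j (σ j - 1))) (j := j) (d := -1)
    (c := c (σ j)) (Q := fun t i => G (σ j) (i + 1) (-t)) (fun t => funext fun i => by
      simp only [gCols, update_self, smul_eq_mul, Pi.sub_apply, Pi.smul_apply]
      rw [h.g_eq_sub _ _ _ (by omega) (Nat.le_add_left 1 i) i.2, hsucc, neg_add, neg_neg]) v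
  simpa only [← gCols_update, update_idem, update_eq_self, Pi.single_neg,
    ← sub_eq_add_neg] using this

end IsSummationByPartsPair

theorem colDet_fCols_update_eq_zero {σ : Fin N → ℕ} {j : Fin N}
    (hleft : ∀ k, k ⋖ j → σ k = σ j - 1) {v : Fin N → ℤ} (hv : Monotone v)
    (hv' : ¬ Monotone (v - Pi.single j 1)) :
    colDet (fCols F (update σ j (σ j - 1))) v = 0 := by
  obtain ⟨k, hkj, hvk⟩ : ∃ k, k ⋖ j ∧ v k = v j := by
    by_contra! hne; exact hv' (hv.sub_single_one hne)
  refine colDet_eq_zero_of_column_eq hkj.ne ?_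
  rw [hvk]; funext i
  simp only [fCols, update_self, update_of_ne hkj.ne, hleft k hkj]

theorem colDet_gCols_eq_zero {σ : Fin N → ℕ} {j : Fin N} (hright : ∀ l, j ⋖ l → σ l = σ j)
    {w : Fin N → ℤ} (hw : Monotone w) (hw' : ¬ Monotone (w + Pi.single j 1)) :
    colDet (gCols G σ) w = 0 := by
  obtain ⟨l, hjl, hwl⟩ : ∃ l, j ⋖ l ∧ w j = w l := by
    by_contra! hne; exact hw' (hw.add_single_one hne)
  refine colDet_eq_zero_of_column_eq hjl.ne ?_
  rw [hwl]; funext i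
  simp only [gCols, hright l hjl]

-- Summation by parts in `u_j`. A boundary point of `W_N` has `u_j` equal to a neighbouring entry,
-- and `hleft`, `hright` make the two corresponding columns equal, so the boundary terms vanish.
theorem IsSummationByPartsPair.sbpSum_update (h : IsSummationByPartsPair N F G c α β)
    {σ : Fin N → ℕ} (hσ : ∀ k, σ k ≤ N) {j : Fin N} (hj : 1 ≤ σ j)
    (hleft : ∀ k, k ⋖ j → σ k = σ j - 1) (hright : ∀ l, j ⋖ l → σ l = σ j) :
    sbpSum F G σ = sbpSum F G (update σ j (σ j - 1)) := by
  set σ' := update σ j (σ j - 1)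
  set e : Fin N → ℤ := Pi.single j 1
  set A := colDet (fCols F σ')
  set B := colDet (gCols G σ)
  have hσ' : ∀ k, σ' k ≤ N := fun k => by
    by_cases hk : k = j
    · subst hk; simp only [σ', update_self]; exact (Nat.sub_le _ _).trans (hσ k)
    · simp only [σ', update_of_ne hk]; exact hσ k
  have he : ∀ k, e k ≤ 1 := fun k => by
    simp only [e, Pi.single_apply]; split_ifs <;> simp
  have hsum₁ : Summable fun u : {u : Fin N → ℤ // Monotone u} => A (u + e) * B u := by
    simpa using h.summable_colDet_mul_colDet hσ' hσ he (d₂ := 0) (by simp)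
  have hsum₂ : Summable fun u : {u : Fin N → ℤ // Monotone u} => c (σ j) * (A u * B u) := by
    simpa using (h.summable_colDet_mul_colDet hσ' hσ (d₁ := 0) (d₂ := 0) (by simp)
      (by simp)).mul_left (c (σ j))
  have hsum₃ : Summable fun v : {v : Fin N → ℤ // Monotone v} => A v * B (v - e) := by
    simpa [← sub_eq_add_neg] using h.summable_colDet_mul_colDet hσ' hσ (d₁ := 0) (d₂ := -e)
      (by simp) (fun k => by simpa using he k)
  calc sbpSum F G σ
      = ∑' u : {u : Fin N → ℤ // Monotone u}, (A (u + e) * B u - c (σ j) * (A u * B u)) :=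
        tsum_congr fun u => by rw [h.colDet_fCols_eq_sub hj (hσ j)]; ring
    _ = ∑' v : {v : Fin N → ℤ // Monotone v}, (A v * B (v - e) - c (σ j) * (A v * B v)) := by
        rw [hsum₁.tsum_sub hsum₂, hsum₃.tsum_sub hsum₂, tsum_monotone_mul_shift e
          (fun v => colDet_fCols_update_eq_zero hleft) (fun w => colDet_gCols_eq_zero hright)]
    _ = sbpSum F G σ' := tsum_congr fun v => by
        rw [h.colDet_gCols_update_eq_sub hj (hσ j)]; ring

end SummationByParts

section Staircase

variable {N : ℕ} {F G : ℕ → ℕ → ℤ → ℂ} {c : ℕ → ℂ} {α β : ℤ}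

/-- Lowering entry `n` of `stairPattern N p n` gives `stairPattern N p (n + 1)`; these patterns
lead from `k ↦ min (k + 1) p` (`n = p - 1`) to `k ↦ min (k + 1) (p - 1)` (`n = N`). -/
def stairPattern (N p n : ℕ) (k : Fin N) : ℕ :=
  if k.1 < n then min (k.1 + 1) (p - 1) else min (k.1 + 1) p

namespace IsSummationByPartsPair

theorem sbpSum_stairPattern_succ (h : IsSummationByPartsPair N F G c α β) {p n : ℕ}
    (hp : 1 ≤ p) (hpN : p ≤ N) (hpn : p - 1 ≤ n) (hn : n < N) :
    sbpSum F G (stairPattern N p n) = sbpSum F G (stairPattern N p (n + 1)) := by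
  set j : Fin N := ⟨n, hn⟩
  have hj : stairPattern N p n j = p := by simp [j, stairPattern]; omega
  have hσ : ∀ k, stairPattern N p n k ≤ N := fun k => by
    simp only [stairPattern]; split_ifs <;> omega
  have hleft : ∀ k, k ⋖ j → stairPattern N p n k = stairPattern N p n j - 1 := fun k hk => by
    simp only [j, Fin.covBy_iff, Nat.covBy_iff_add_one_eq] at hk
    rw [hj]; simp only [stairPattern]; split_ifs <;> omega
  have hright : ∀ l, j ⋖ l → stairPattern N p n l = stairPattern N p n j := fun l hl => by
    simp only [j, Fin.covBy_iff, Nat.covBy_iff_add_one_eq] at hl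
    rw [hj]; simp only [stairPattern]; split_ifs <;> omega
  convert h.sbpSum_update hσ (by omega) hleft hright using 2
  funext k
  rw [hj]
  by_cases hk : k = j
  · subst hk; simp [j, stairPattern]; omega
  · have : k.1 ≠ n := fun h => hk (Fin.ext h)
    simp only [stairPattern, update_of_ne hk]; split_ifs <;> omega

theorem sbpSum_min_eq (h : IsSummationByPartsPair N F G c α β) {p : ℕ} (hp : 1 ≤ p)
    (hpN : p ≤ N) :
    sbpSum F G (fun k : Fin N => min (k.1 + 1) p)
      = sbpSum F G (fun k : Fin N => min (k.1 + 1) (p - 1)) := by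
  have key : ∀ n, p - 1 ≤ n → n ≤ N →
      sbpSum F G (stairPattern N p (p - 1)) = sbpSum F G (stairPattern N p n) := by
    intro n hn
    induction n, hn using Nat.le_induction with
    | base => intro _; rfl
    | succ n hpn ih =>
      intro hn
      rw [ih (by omega), h.sbpSum_stairPattern_succ hp hpN hpn hn]
  convert key N (by omega) le_rfl using 2 <;> funext k <;> simp only [stairPattern] <;>
    split_ifs <;> omega

theorem sbpSum_staircase_eq (h : IsSummationByPartsPair N F G c α β) :
    sbpSum F G (fun k : Fin N => k.1 + 1) = sbpSum F G (fun _ : Fin N => 0) := by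
  have key : ∀ d ≤ N, sbpSum F G (fun k : Fin N => min (k.1 + 1) N)
      = sbpSum F G (fun k : Fin N => min (k.1 + 1) (N - d)) := by
    intro d
    induction d with
    | zero => intro _; rfl
    | succ d ih =>
      intro hd
      rw [ih (by omega), h.sbpSum_min_eq (by omega) (by omega), Nat.sub_sub]
  convert key N le_rfl using 2 <;> funext k <;> omega

end IsSummationByPartsPair

end Staircase

section ContourIntegral

open Metric

/-- `z = 1 / w` reverses the orientation, which cancels the sign of `dz = -dw / w ^ 2`. -/
theorem circleIntegral_comp_inv (f : ℂ → ℂ) {R : ℝ} (hR : 0 < R) :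
    ∮ z in C(0, R), f z = ∮ w in C(0, R⁻¹), (w ^ 2)⁻¹ * f w⁻¹ := by
  have hinv : ∀ θ : ℝ, (circleMap 0 R⁻¹ θ)⁻¹ = circleMap 0 R (-θ) := fun θ => by
    simp only [circleMap_zero, mul_inv, ← Complex.exp_neg, Complex.ofReal_inv, inv_inv]
    push_cast; ring_nf
  have hper : Function.Periodic
      (fun θ : ℝ => deriv (circleMap 0 R) θ • f (circleMap 0 R θ)) (2 * Real.pi) := fun θ => by
    simp only [deriv_circleMap, periodic_circleMap _ _ θ]
  calc ∮ z in C(0, R), f z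
      = ∫ θ in -(2 * Real.pi)..0, deriv (circleMap 0 R) θ • f (circleMap 0 R θ) := by
        simpa [circleIntegral] using hper.intervalIntegral_add_eq 0 (-(2 * Real.pi))
    _ = ∫ θ in (0 : ℝ)..2 * Real.pi, deriv (circleMap 0 R) (-θ) • f (circleMap 0 R (-θ)) := by
        rw [intervalIntegral.integral_comp_neg
          (fun θ => deriv (circleMap 0 R) θ • f (circleMap 0 R θ))]
        simp
    _ = ∮ w in C(0, R⁻¹), (w ^ 2)⁻¹ * f w⁻¹ := by
        refine intervalIntegral.integral_congr fun θ _ => ?_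
        have hw : circleMap 0 R⁻¹ θ ≠ 0 := circleMap_ne_center (inv_ne_zero hR.ne')
        simp only [deriv_circleMap, ← hinv, smul_eq_mul]
        field_simp

theorem mapsTo_inv_sphere {R : ℝ} : Set.MapsTo (fun z : ℂ => z⁻¹) (sphere 0 R) (sphere 0 R⁻¹) :=
  fun z hz => by simp_all

theorem continuousOn_zpow_mul_comp_inv {φ : ℂ → ℂ} {R : ℝ} (hR : 0 < R)
    (hφ : ContinuousOn φ (sphere 0 R⁻¹)) (n : ℤ) :
    ContinuousOn (fun z => z ^ n * φ z⁻¹) (sphere 0 R) := by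
  have h0 : ∀ z ∈ sphere (0 : ℂ) R, z ≠ 0 := fun z hz => ne_of_mem_sphere hz hR.ne'
  exact (continuousOn_id.zpow₀ n fun z hz => Or.inl (h0 z hz)).mul
    (hφ.comp (continuousOn_inv₀.mono h0) mapsTo_inv_sphere)

theorem circleIntegral_zpow_mul_comp_inv_eq_zero {φ : ℂ → ℂ} {R : ℝ} (hR : 0 < R)
    (hφ : DifferentiableOn ℂ φ (closedBall 0 R⁻¹)) {n : ℤ} (hn : n ≤ -2) :
    ∮ z in C(0, R), z ^ n * φ z⁻¹ = 0 := by
  have hR' : 0 < R⁻¹ := inv_pos.2 hR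
  calc ∮ z in C(0, R), z ^ n * φ z⁻¹
      = ∮ w in C(0, R⁻¹), w ^ (-n - 2).toNat * φ w := by
        rw [circleIntegral_comp_inv _ hR]
        refine circleIntegral.integral_congr hR'.le fun w hw => ?_
        have hw0 : w ≠ 0 := ne_of_mem_sphere hw hR'.ne'
        rw [show w ^ (-n - 2).toNat = w ^ (-n - 2) by
            rw [← zpow_natCast, Int.toNat_of_nonneg (by omega)],
          inv_inv, zpow_sub₀ hw0, inv_zpow', zpow_ofNat]
        ring
    _ = 0 := by
      refine DiffContOnCl.circleIntegral_eq_zero hR'.le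
        (DifferentiableOn.diffContOnCl ?_)
      rw [closure_ball _ hR'.ne']
      exact (differentiable_pow _).differentiableOn.mul hφ

theorem circleIntegral_zpow_mul_comp_inv_eq_sub {φ ψ : ℂ → ℂ} {R : ℝ} (hR : 0 < R)
    (hψ : ContinuousOn ψ (sphere 0 R⁻¹)) {c : ℂ}
    (hφψ : ∀ w ∈ sphere (0 : ℂ) R⁻¹, φ w = (1 - c * w) * ψ w) (n : ℤ) :
    ∮ z in C(0, R), z ^ n * φ z⁻¹
      = (∮ z in C(0, R), z ^ n * ψ z⁻¹) - c * ∮ z in C(0, R), z ^ (n - 1) * ψ z⁻¹ := by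
  have h₁ : CircleIntegrable (fun z => z ^ n * ψ z⁻¹) 0 R :=
    (continuousOn_zpow_mul_comp_inv hR hψ n).circleIntegrable hR.le
  have h₂ : CircleIntegrable (fun z => c * (z ^ (n - 1) * ψ z⁻¹)) 0 R :=
    (continuousOn_const.mul (continuousOn_zpow_mul_comp_inv hR hψ (n - 1))).circleIntegrable
      hR.le
  rw [← circleIntegral.integral_const_mul, ← circleIntegral.integral_sub h₁ h₂]
  refine circleIntegral.integral_congr hR.le fun z hz => ?_
  rw [hφψ z⁻¹ (mapsTo_inv_sphere hz), zpow_sub_one₀ (ne_of_mem_sphere hz hR.ne')]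
  ring

end ContourIntegral

theorem Finset.prod_sub_eq_pow_card_mul {K ι : Type*} [Field K] (s : Finset ι) (d : ι → K)
    {z : K} (hz : z ≠ 0) : ∏ k ∈ s, (z - d k) = z ^ s.card * ∏ k ∈ s, (1 - d k * z⁻¹) := by
  rw [← Finset.prod_const, ← Finset.prod_mul_distrib]
  exact Finset.prod_congr rfl fun k _ => by field_simp

theorem one_sub_mul_ne_zero_of_norm_lt {R : ℝ} {d w : ℂ} (hd : ‖d‖ < R) (hw : ‖w‖ ≤ R⁻¹) :
    1 - d * w ≠ 0 := by
  have hR : 0 < R := (norm_nonneg d).trans_lt hd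
  have : ‖d * w‖ < 1 := calc
    ‖d * w‖ ≤ ‖d‖ * R⁻¹ := by rw [norm_mul]; gcongr
    _ < R * R⁻¹ := by gcongr
    _ = 1 := mul_inv_cancel₀ hR.ne'
  intro h
  rw [← sub_eq_zero.1 h, norm_one] at this
  exact lt_irrefl _ this

theorem prod_one_sub_mul_ne_zero_of_norm_lt {ι : Type*} {R : ℝ} {s : Finset ι} {d : ι → ℂ}
    {w : ℂ} (hd : ∀ k ∈ s, ‖d k‖ < R) (hw : ‖w‖ ≤ R⁻¹) : ∏ k ∈ s, (1 - d k * w) ≠ 0 :=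
  Finset.prod_ne_zero_iff.2 fun k hk => one_sub_mul_ne_zero_of_norm_lt (hd k hk) hw

section Kernels

open Metric

variable (a b : ℕ → ℝ) (m : ℕ)

/-- `fInt` and `gInt` are `(2πi)⁻¹ ∮ z ^ n * K z⁻¹` for a kernel `K` holomorphic on `|w| ≤ 1 / R`
(`fInt_eq`, `gInt_eq`): the recurrences come from splitting off the factor `1 - w / b_σ` of `K`,
the vanishing from `n ≤ -2`. -/
noncomputable def fKernel (x : ℕ → ℤ) (i σ : ℕ) (w : ℂ) : ℂ :=
  (b i : ℂ) ^ (-x i) * (∏ k ∈ Finset.Icc 1 σ, (1 - (b k : ℂ)⁻¹ * w)) /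
    ((∏ k ∈ Finset.Icc 1 i, (1 - (b k : ℂ)⁻¹ * w)) *
      ∏ k ∈ Finset.Icc 1 (m - 1), (1 - (a k : ℂ) * w))

noncomputable def gKernel (y : ℕ → ℤ) (σ i : ℕ) (w : ℂ) : ℂ :=
  (b i : ℂ) ^ y i * (∏ k ∈ Finset.Icc 1 i, (1 - (b k : ℂ)⁻¹ * w)) /
    ((∏ k ∈ Finset.Icc 1 σ, (1 - (b k : ℂ)⁻¹ * w)) * (1 - (a m : ℂ) * w))

variable {a b m} {R : ℝ}

theorem fInt_eq (x : ℕ → ℤ) (hR : 0 < R) (i σ : ℕ) (u : ℤ) :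
    fInt a b x m R i σ u = (2 * (Real.pi : ℂ) * Complex.I)⁻¹ *
      ∮ z in C(0, R), z ^ (u + σ - i - x i - 1) * fKernel a b m x i σ z⁻¹ := by
  unfold fInt
  congr 1
  refine circleIntegral.integral_congr hR.le fun z hz => ?_
  have hz0 : z ≠ 0 := ne_of_mem_sphere hz hR.ne'
  simp only [fKernel, Finset.prod_sub_eq_pow_card_mul _ _ hz0, Nat.card_Icc,
    add_tsub_cancel_right, Finset.prod_inv_distrib, div_eq_mul_inv, mul_zpow,
    zpow_sub₀ hz0, zpow_add₀ hz0, zpow_natCast, zpow_neg, zpow_one]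
  ring

theorem gInt_eq (y : ℕ → ℤ) (hR : 0 < R) (σ i : ℕ) (u : ℤ) :
    gInt a b y m R σ i u = (2 * (Real.pi : ℂ) * Complex.I)⁻¹ *
      ∮ w in C(0, R), w ^ (u + y i + i - σ - 1) * gKernel a b m y σ i w⁻¹ := by
  unfold gInt
  congr 1
  refine circleIntegral.integral_congr hR.le fun w hw => ?_
  have hw0 : w ≠ 0 := ne_of_mem_sphere hw hR.ne'
  have ham : w - (a m : ℂ) = w * (1 - (a m : ℂ) * w⁻¹) := by field_simp
  simp only [gKernel, Finset.prod_sub_eq_pow_card_mul _ _ hw0, Nat.card_Icc,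
    add_tsub_cancel_right, ham, mul_inv, div_eq_mul_inv, mul_zpow,
    zpow_sub₀ hw0, zpow_add₀ hw0, zpow_natCast, zpow_one]
  ring

theorem differentiableOn_fKernel (x : ℕ → ℤ) {i : ℕ} (σ : ℕ)
    (hb : ∀ k ∈ Finset.Icc 1 i, ‖((b k : ℂ))⁻¹‖ < R)
    (ha : ∀ k ∈ Finset.Icc 1 (m - 1), ‖(a k : ℂ)‖ < R) :
    DifferentiableOn ℂ (fKernel a b m x i σ) (closedBall 0 R⁻¹) := by
  refine DifferentiableOn.div (by fun_prop) (by fun_prop) fun w hw => ?_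
  rw [mem_closedBall_zero_iff] at hw
  exact mul_ne_zero (prod_one_sub_mul_ne_zero_of_norm_lt hb hw)
    (prod_one_sub_mul_ne_zero_of_norm_lt ha hw)

theorem differentiableOn_gKernel (y : ℕ → ℤ) {σ : ℕ} (i : ℕ)
    (hb : ∀ k ∈ Finset.Icc 1 σ, ‖((b k : ℂ))⁻¹‖ < R) (ha : ‖(a m : ℂ)‖ < R) :
    DifferentiableOn ℂ (gKernel a b m y σ i) (closedBall 0 R⁻¹) := by
  refine DifferentiableOn.div (by fun_prop) (by fun_prop) fun w hw => ?_
  rw [mem_closedBall_zero_iff] at hw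
  exact mul_ne_zero (prod_one_sub_mul_ne_zero_of_norm_lt hb hw)
    (one_sub_mul_ne_zero_of_norm_lt ha hw)

theorem fKernel_succ (x : ℕ → ℤ) (i σ : ℕ) (w : ℂ) :
    fKernel a b m x i (σ + 1) w = (1 - ((b (σ + 1) : ℂ))⁻¹ * w) * fKernel a b m x i σ w := by
  simp only [fKernel, Finset.prod_Icc_succ_top (Nat.le_add_left 1 σ)]
  ring

theorem gKernel_eq_mul_succ (y : ℕ → ℤ) (σ i : ℕ) {w : ℂ}
    (hw : 1 - ((b (σ + 1) : ℂ))⁻¹ * w ≠ 0) :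
    gKernel a b m y σ i w = (1 - ((b (σ + 1) : ℂ))⁻¹ * w) * gKernel a b m y (σ + 1) i w := by
  set c := 1 - ((b (σ + 1) : ℂ))⁻¹ * w
  have key : ∀ P Q A : ℂ, P / (Q * A) = c * (P / (Q * c * A)) := fun P Q A => by
    rw [← mul_div_assoc, show Q * c * A = c * (Q * A) by ring, mul_div_mul_left _ _ hw]
  simp only [gKernel, Finset.prod_Icc_succ_top (Nat.le_add_left 1 σ)]
  exact key _ _ _

theorem fInt_succ (x : ℕ → ℤ) (hR : 0 < R) {i : ℕ}
    (hb : ∀ k ∈ Finset.Icc 1 i, ‖((b k : ℂ))⁻¹‖ < R)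
    (ha : ∀ k ∈ Finset.Icc 1 (m - 1), ‖(a k : ℂ)‖ < R) (σ : ℕ) (u : ℤ) :
    fInt a b x m R i (σ + 1) u
      = fInt a b x m R i σ (u + 1) - ((b (σ + 1) : ℂ))⁻¹ * fInt a b x m R i σ u := by
  have hexp : u + ↑(σ + 1) - i - x i - 1 = u + 1 + σ - i - x i - 1 := by push_cast; ring
  rw [fInt_eq x hR, fInt_eq x hR, fInt_eq x hR, hexp,
    circleIntegral_zpow_mul_comp_inv_eq_sub hR
      ((differentiableOn_fKernel x σ hb ha).continuousOn.mono sphere_subset_closedBall)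
      (fun w _ => fKernel_succ x i σ w),
    show u + 1 + σ - i - x i - 1 - 1 = u + σ - i - x i - 1 by ring]
  ring

theorem gInt_eq_sub (y : ℕ → ℤ) (hR : 0 < R) {σ : ℕ}
    (hb : ∀ k ∈ Finset.Icc 1 (σ + 1), ‖((b k : ℂ))⁻¹‖ < R) (ha : ‖(a m : ℂ)‖ < R)
    (i : ℕ) (u : ℤ) :
    gInt a b y m R σ i u
      = gInt a b y m R (σ + 1) i (u + 1) - ((b (σ + 1) : ℂ))⁻¹ * gInt a b y m R (σ + 1) i u := by
  have hexp : u + 1 + y i + i - ↑(σ + 1) - 1 = u + y i + i - σ - 1 := by push_cast; ring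
  rw [gInt_eq y hR, gInt_eq y hR, gInt_eq y hR, hexp,
    circleIntegral_zpow_mul_comp_inv_eq_sub hR
      ((differentiableOn_gKernel y i hb ha).continuousOn.mono sphere_subset_closedBall)
      (fun w hw => gKernel_eq_mul_succ y σ i (one_sub_mul_ne_zero_of_norm_lt
        (hb _ (Finset.right_mem_Icc.2 (Nat.le_add_left 1 σ))) (mem_sphere_zero_iff_norm.1 hw).le)),
    show u + y i + i - σ - 1 - 1 = u + y i + i - ↑(σ + 1) - 1 by push_cast; ring]
  ring

theorem fInt_eq_zero (x : ℕ → ℤ) (hR : 0 < R) {i : ℕ}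
    (hb : ∀ k ∈ Finset.Icc 1 i, ‖((b k : ℂ))⁻¹‖ < R)
    (ha : ∀ k ∈ Finset.Icc 1 (m - 1), ‖(a k : ℂ)‖ < R) {σ : ℕ} {u : ℤ} (hu : u + σ < x i + i) :
    fInt a b x m R i σ u = 0 := by
  rw [fInt_eq x hR, circleIntegral_zpow_mul_comp_inv_eq_zero hR
    (differentiableOn_fKernel x σ hb ha) (by omega), mul_zero]

theorem gInt_eq_zero (y : ℕ → ℤ) (hR : 0 < R) {σ : ℕ}
    (hb : ∀ k ∈ Finset.Icc 1 σ, ‖((b k : ℂ))⁻¹‖ < R) (ha : ‖(a m : ℂ)‖ < R) {i : ℕ} {u : ℤ}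
    (hu : u + y i + i < σ) :
    gInt a b y m R σ i u = 0 := by
  rw [gInt_eq y hR, circleIntegral_zpow_mul_comp_inv_eq_zero hR
    (differentiableOn_gKernel y i hb ha) (by omega), mul_zero]

end Kernels

theorem radius_pos_and_norm_lt {N : ℕ} (hN : 1 ≤ N) {a b : ℕ → ℝ}
    (ha : ∀ i, 1 ≤ i → 0 ≤ a i ∧ a i ≤ 1) (hb : ∀ j, 1 ≤ j → j ≤ N → 0 < b j ∧ b j ≤ 1)
    {R : ℝ} (hR : ∀ k, 1 ≤ k → k ≤ N → 1 / b k < R) :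
    0 < R ∧ (∀ k ∈ Finset.Icc 1 N, ‖((b k : ℂ))⁻¹‖ < R) ∧ ∀ k, 1 ≤ k → ‖(a k : ℂ)‖ < R := by
  have hR1 : 1 < R := by
    have h := hb 1 le_rfl hN
    have : 1 ≤ 1 / b 1 := by rw [le_div_iff₀ h.1]; linarith
    linarith [hR 1 le_rfl hN]
  refine ⟨by linarith, fun k hk => ?_, fun k hk => ?_⟩
  · obtain ⟨hk1, hkN⟩ := Finset.mem_Icc.1 hk
    rw [norm_inv, Complex.norm_real, Real.norm_of_nonneg (hb k hk1 hkN).1.le, ← one_div]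
    exact hR k hk1 hkN
  · rw [Complex.norm_real, Real.norm_of_nonneg (ha k hk).1]
    linarith [(ha k hk).2]

theorem lemma_sbp1_general
    (N : ℕ) (hN : 1 ≤ N)
    (a b : ℕ → ℝ)
    (ha : ∀ i, 1 ≤ i → 0 ≤ a i ∧ a i ≤ 1)
    (hb : ∀ j, 1 ≤ j → j ≤ N → 0 < b j ∧ b j ≤ 1)
    (m : ℕ) (hm : 1 ≤ m)
    (x y : ℕ → ℤ)
    (hx : ∀ i j, 1 ≤ i → i ≤ j → j ≤ N → x i ≤ x j)
    (hy : ∀ i j, 1 ≤ i → i ≤ j → j ≤ N → y i ≤ y j)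
    (R₁ R₂ : ℝ)
    (hR₁ : ∀ k, 1 ≤ k → k ≤ N → 1 / b k < R₁)
    (hR₂ : ∀ k, 1 ≤ k → k ≤ N → 1 / b k < R₂) :
    (∑' u : {u : Fin N → ℤ // Monotone u},
        Matrix.det (Matrix.of fun i j : Fin N =>
            fInt a b x m R₁ (i.1 + 1) (j.1 + 1) (u.1 j))
          * Matrix.det (Matrix.of fun i j : Fin N =>
              gInt a b y m R₂ (j.1 + 1) (i.1 + 1) (-(u.1 j))))
      = ∑' u : {u : Fin N → ℤ // Monotone u},
          Matrix.det (Matrix.of fun i j : Fin N =>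
              fInt a b x m R₁ (i.1 + 1) 0 (u.1 j))
            * Matrix.det (Matrix.of fun i j : Fin N =>
                gInt a b y m R₂ 0 (i.1 + 1) (-(u.1 j))) := by
  obtain ⟨hR₁0, hb₁, ha₁⟩ := radius_pos_and_norm_lt hN ha hb hR₁
  obtain ⟨hR₂0, hb₂, ha₂⟩ := radius_pos_and_norm_lt hN ha hb hR₂
  have hIcc : ∀ {n}, n ≤ N → Finset.Icc 1 n ⊆ Finset.Icc 1 N :=
    fun hn => Finset.Icc_subset_Icc le_rfl hn
  have ha₁' : ∀ k ∈ Finset.Icc 1 (m - 1), ‖(a k : ℂ)‖ < R₁ :=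
    fun k hk => ha₁ k (Finset.mem_Icc.1 hk).1
  refine IsSummationByPartsPair.sbpSum_staircase_eq (F := fun i σ u => fInt a b x m R₁ i σ u)
    (G := fun σ i u => gInt a b y m R₂ σ i u) (c := fun σ => ((b σ : ℂ))⁻¹)
    (α := x 1 - N) (β := -y N - N - 1) ⟨?_, ?_, ?_, ?_⟩
  · intro i σ u _ hiN _
    exact fInt_succ x hR₁0 (fun k hk => hb₁ k (hIcc hiN hk)) ha₁' σ u
  · intro σ i u hσ _ _
    exact gInt_eq_sub y hR₂0 (fun k hk => hb₂ k (hIcc hσ hk)) (ha₂ m hm) i u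
  · intro i σ u hi hiN hσ hu
    refine fInt_eq_zero x hR₁0 (fun k hk => hb₁ k (hIcc hiN hk)) ha₁' ?_
    have := hx 1 i le_rfl hi hiN
    omega
  · intro σ i u hσ hi hiN hu
    refine gInt_eq_zero y hR₂0 (fun k hk => hb₂ k (hIcc hσ hk)) (ha₂ m hm) ?_
    have := hy i N hi hiN le_rfl
    omega

/-- **Lemma 2.3** (summation by parts identity for the convolution sums). -/
theorem lemma_sbp1
    (N : ℕ) (hN : 1 ≤ N)
    (a b : ℕ → ℝ)
    (ha : ∀ i, 1 ≤ i → 0 ≤ a i ∧ a i ≤ 1)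
    (hb : ∀ j, 1 ≤ j → j ≤ N → 0 < b j ∧ b j ≤ 1)
    (hab : ∀ i j, 1 ≤ i → 1 ≤ j → j ≤ N → 0 < a i * b j ∧ a i * b j < 1)
    (m : ℕ) (hm : 1 ≤ m)
    (x y : ℕ → ℤ)
    (hx : ∀ i j, 1 ≤ i → i ≤ j → j ≤ N → x i ≤ x j)
    (hy : ∀ i j, 1 ≤ i → i ≤ j → j ≤ N → y i ≤ y j)
    (R₁ R₂ : ℝ)
    (hR₁ : ∀ k, 1 ≤ k → k ≤ N → 1 / b k < R₁)
    (hR₂ : ∀ k, 1 ≤ k → k ≤ N → 1 / b k < R₂) :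
    (∑' u : {u : Fin N → ℤ // Monotone u},
        Matrix.det (Matrix.of fun i j : Fin N =>
            fInt a b x m R₁ (i.1 + 1) (j.1 + 1) (u.1 j))
          * Matrix.det (Matrix.of fun i j : Fin N =>
              gInt a b y m R₂ (j.1 + 1) (i.1 + 1) (-(u.1 j))))
      = ∑' u : {u : Fin N → ℤ // Monotone u},
          Matrix.det (Matrix.of fun i j : Fin N =>
              fInt a b x m R₁ (i.1 + 1) 0 (u.1 j))
            * Matrix.det (Matrix.of fun i j : Fin N =>
                gInt a b y m R₂ 0 (i.1 + 1) (-(u.1 j))) :=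
  lemma_sbp1_general N hN a b ha hb m hm x y hx hy R₁ R₂ hR₁ hR₂
end

section
/- Let h(j) = h_k for j ∈ (n_{k−1}, n_k] as in the context, and define the N × N matrix F_b(i,j) = (1/2πi)∮_{γ_b} dz (z b_j)^{h(j)−1} (z b_i)^{−x_i} [∏_{k=1}^{j−1}(z − 1/b_k) / ∏_{k=1}^{i}(z − 1/b_k)] ∏_{k=1}^{m}(1 − a_k b_j)/(1 − a_k/z), where γ_b is a simple closed counterclockwise contour encircling all of the points 1/b_1, …, 1/b_N and none of the points 0, a_1, …, a_m. Then F_b(i,j) = 0 whenever i < j and F_b(j,j) = 1 for all j; in particular F_b is lower triangular with unit diagonal and det F_b = 1. -/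
/-!
On the circle the integrand of `F_b(i, j)` is `g(z) · ∏_{k < j} (z - 1/b_k) / ∏_{k ≤ i} (z - 1/b_k)`
with `g` holomorphic on the closed disc, since `0` and the `a_k` lie outside it. For `i < j` the
quotient is a polynomial, so the integral vanishes by Cauchy–Goursat. For `i = j` it is
`(z - 1/b_j)⁻¹`, and Cauchy's integral formula gives `g(1/b_j)`, which is `1`: every factor
`(1 - a_k b_j) / (1 - a_k / z)` of `g` equals `1` at `z = 1/b_j`, and is defined there because
`a_k ≠ 1/b_j` (one lies outside the disc, the other inside).
-/

open Finset Metric Complex Real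

section PartialProducts

variable {K : Type*} [Field K] (f : ℕ → K)

theorem prod_Icc_one_div_prod_Icc_one_of_le {n l : ℕ} (hnl : n ≤ l)
    (hf : ∏ k ∈ Icc 1 n, f k ≠ 0) :
    (∏ k ∈ Icc 1 l, f k) / ∏ k ∈ Icc 1 n, f k = ∏ k ∈ Ioc n l, f k := by
  have hIcc (k : ℕ) : Icc 1 k = Ioc 0 k := Icc_succ_left_eq_Ioc 0 k
  rw [hIcc] at hf
  rw [hIcc, hIcc, ← prod_Ioc_consecutive f n.zero_le hnl, mul_div_cancel_left₀ _ hf]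

theorem prod_Icc_one_div_prod_Icc_one_succ (n : ℕ) (hf : ∏ k ∈ Icc 1 n, f k ≠ 0) :
    (∏ k ∈ Icc 1 n, f k) / ∏ k ∈ Icc 1 (n + 1), f k = (f (n + 1))⁻¹ := by
  rw [prod_Icc_succ_top (by omega), div_mul_cancel_left₀ hf]

end PartialProducts

section CircleIntegrals

variable {c : ℂ} {R : ℝ} {g : ℂ → ℂ} {w : ℕ → ℂ} {n : ℕ}

theorem prod_sub_ne_zero_of_mem_sphere (hw : ∀ k ∈ Icc 1 n, w k ∉ sphere c R) {z : ℂ}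
    (hz : z ∈ sphere c R) : ∏ k ∈ Icc 1 n, (z - w k) ≠ 0 :=
  prod_ne_zero_iff.2 fun k hk hzw => hw k hk (sub_eq_zero.1 hzw ▸ hz)

theorem circleIntegral_mul_prod_div_prod_eq_zero (hR : 0 ≤ R)
    (hg : DifferentiableOn ℂ g (closedBall c R)) (hw : ∀ k ∈ Icc 1 n, w k ∉ sphere c R)
    {l : ℕ} (hnl : n ≤ l) :
    ∮ z in C(c, R), g z * ((∏ k ∈ Icc 1 l, (z - w k)) / ∏ k ∈ Icc 1 n, (z - w k)) = 0 := by
  rw [circleIntegral.integral_congr hR (g := fun z => g z * ∏ k ∈ Ioc n l, (z - w k))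
    fun z hz => by
      simp only [prod_Icc_one_div_prod_Icc_one_of_le _ hnl (prod_sub_ne_zero_of_mem_sphere hw hz)]]
  have hd : DifferentiableOn ℂ (fun z => g z * ∏ k ∈ Ioc n l, (z - w k)) (closedBall c R) :=
    hg.mul (DifferentiableOn.fun_finsetProd fun k _ => differentiableOn_id.sub_const _)
  exact (hd.mono closure_ball_subset_closedBall).diffContOnCl.circleIntegral_eq_zero hR

theorem circleIntegral_mul_prod_div_prod_succ (hR : 0 ≤ R)
    (hg : DifferentiableOn ℂ g (closedBall c R)) (hw : ∀ k ∈ Icc 1 n, w k ∉ sphere c R)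
    (hwn : w (n + 1) ∈ ball c R) :
    ∮ z in C(c, R), g z * ((∏ k ∈ Icc 1 n, (z - w k)) / ∏ k ∈ Icc 1 (n + 1), (z - w k)) =
      2 * π * I * g (w (n + 1)) := by
  rw [circleIntegral.integral_congr hR (g := fun z => (z - w (n + 1))⁻¹ • g z) fun z hz => by
    simp only [prod_Icc_one_div_prod_Icc_one_succ _ n (prod_sub_ne_zero_of_mem_sphere hw hz),
      mul_comm (g z), smul_eq_mul]]
  exact hg.circleIntegral_sub_inv_smul hwn

end CircleIntegrals

section RegularFactors

variable {s : Set ℂ}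

theorem one_sub_div_ne_zero {K : Type*} [Field K] {a z : K} (hz : z ≠ 0) (ha : z ≠ a) :
    1 - a / z ≠ 0 := by
  rw [one_sub_div hz]
  exact div_ne_zero (sub_ne_zero.2 ha) hz

theorem prod_one_sub_mul_div_one_sub_div_inv {K ι : Type*} [Field K] {t : Finset ι}
    {a : ι → K} {β : K} (hβ : β ≠ 0) (ha : ∀ k ∈ t, β⁻¹ ≠ a k) :
    ∏ k ∈ t, (1 - a k * β) / (1 - a k / β⁻¹) = 1 :=
  prod_eq_one fun k hk => by
    rw [div_inv_eq_mul]
    exact div_self (div_inv_eq_mul (a k) β ▸ one_sub_div_ne_zero (inv_ne_zero hβ) (ha k hk))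

theorem differentiableOn_mul_const_zpow (hs : (0 : ℂ) ∉ s) {β : ℂ} (hβ : β ≠ 0) (e : ℤ) :
    DifferentiableOn ℂ (fun z => (z * β) ^ e) s :=
  (differentiableOn_id.mul_const β).zpow <|
    Or.inl fun _ hz => mul_ne_zero (ne_of_mem_of_not_mem hz hs) hβ

theorem differentiableOn_prod_div_one_sub_div {ι : Type*} {t : Finset ι} {a : ι → ℂ}
    (hs : (0 : ℂ) ∉ s) (ha : ∀ k ∈ t, a k ∉ s) (d : ι → ℂ) :
    DifferentiableOn ℂ (fun z => ∏ k ∈ t, d k / (1 - a k / z)) s :=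
  DifferentiableOn.fun_finsetProd fun k hk =>
    (differentiableOn_const _).div ((differentiableOn_const _).sub
      ((differentiableOn_const _).div differentiableOn_id fun _ hz =>
        ne_of_mem_of_not_mem hz hs))
      fun _ hz =>
        one_sub_div_ne_zero (ne_of_mem_of_not_mem hz hs) (ne_of_mem_of_not_mem hz (ha k hk))

end RegularFactors

theorem Fb_lower_triangular_unit_diag_general
    (N : ℕ)
    (m : ℕ)
    (a b : ℕ → ℝ)
    (x : ℕ → ℤ)
    (hfun : ℕ → ℤ)
    -- the contour `γ_b`: a circle of center `cb` and radius `rb` encircling all points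
    -- `1/b_k` and none of the points `0, a_1, …, a_m`
    (cb : ℂ) (rb : ℝ) (hrb : 0 < rb)
    (hγb_in : ∀ k, 1 ≤ k → k ≤ N → ‖((b k : ℂ))⁻¹ - cb‖ < rb)
    (hγb_out0 : rb < ‖cb‖)
    (hγb_outa : ∀ k, 1 ≤ k → k ≤ m → rb < ‖(a k : ℂ) - cb‖) :
    ∀ Fb : Matrix (Fin N) (Fin N) ℂ,
      (Fb = Matrix.of fun i j : Fin N =>
        (2 * (Real.pi : ℂ) * Complex.I)⁻¹ *
          ∮ z in C(cb, rb),
            (z * (b (j.1 + 1) : ℂ)) ^ (hfun (j.1 + 1) - 1)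
              * (z * (b (i.1 + 1) : ℂ)) ^ (-(x (i.1 + 1)))
              * ((∏ k ∈ Finset.Icc 1 j.1, (z - ((b k : ℂ))⁻¹))
                  / ∏ k ∈ Finset.Icc 1 (i.1 + 1), (z - ((b k : ℂ))⁻¹))
              * ∏ k ∈ Finset.Icc 1 m,
                  ((1 - (a k : ℂ) * (b (j.1 + 1) : ℂ)) / (1 - (a k : ℂ) / z))) →
      (∀ i j : Fin N, i < j → Fb i j = 0) ∧ (∀ j : Fin N, Fb j j = 1)
        ∧ Matrix.det Fb = 1 := by
  intro Fb hFb
  have hw : ∀ k ∈ Icc 1 N, ((b k : ℂ))⁻¹ ∈ ball cb rb := fun k hk =>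
    mem_ball_iff_norm.2 (hγb_in k (mem_Icc.1 hk).1 (mem_Icc.1 hk).2)
  have hw_sphere : ∀ k ∈ Icc 1 N, ((b k : ℂ))⁻¹ ∉ sphere cb rb := fun k hk hs =>
    sphere_disjoint_ball.ne_of_mem hs (hw k hk) rfl
  have h0 : (0 : ℂ) ∉ closedBall cb rb := by
    simpa [mem_closedBall_iff_norm] using hγb_out0
  have ha : ∀ k ∈ Icc 1 m, (a k : ℂ) ∉ closedBall cb rb := fun k hk =>
    mem_closedBall_iff_norm.not.2 (hγb_outa k (mem_Icc.1 hk).1 (mem_Icc.1 hk).2).not_ge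
  have hb : ∀ k ∈ Icc 1 N, (b k : ℂ) ≠ 0 := fun k hk hbk =>
    h0 (ball_subset_closedBall (by simpa [hbk] using hw k hk))
  have hj : ∀ j : Fin N, j.1 + 1 ∈ Icc 1 N := fun j => mem_Icc.2 ⟨by omega, j.2⟩
  set g : Fin N → Fin N → ℂ → ℂ := fun i j z =>
    (z * (b (j.1 + 1) : ℂ)) ^ (hfun (j.1 + 1) - 1)
      * (z * (b (i.1 + 1) : ℂ)) ^ (-(x (i.1 + 1)))
      * ∏ k ∈ Icc 1 m, ((1 - (a k : ℂ) * (b (j.1 + 1) : ℂ)) / (1 - (a k : ℂ) / z)) with hg_def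
  have hentry : ∀ i j : Fin N, Fb i j = (2 * π * I)⁻¹ * ∮ z in C(cb, rb),
      g i j z * ((∏ k ∈ Icc 1 j.1, (z - ((b k : ℂ))⁻¹))
        / ∏ k ∈ Icc 1 (i.1 + 1), (z - ((b k : ℂ))⁻¹)) := fun i j => by
    rw [hFb, Matrix.of_apply]
    congr 2
    funext z
    simp only [hg_def]
    ring
  have hg : ∀ i j : Fin N, DifferentiableOn ℂ (g i j) (closedBall cb rb) := fun i j =>
    ((differentiableOn_mul_const_zpow h0 (hb _ (hj j)) _).mul
      (differentiableOn_mul_const_zpow h0 (hb _ (hj i)) _)).mul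
      (differentiableOn_prod_div_one_sub_div h0 ha _)
  have hzero : ∀ i j : Fin N, i < j → Fb i j = 0 := fun i j hij => by
    rw [hentry, circleIntegral_mul_prod_div_prod_eq_zero hrb.le (hg i j)
      (fun k hk => hw_sphere k (Icc_subset_Icc_right (mem_Icc.1 (hj i)).2 hk)) hij, mul_zero]
  have hdiag : ∀ j : Fin N, Fb j j = 1 := fun j => by
    have hbj := hb _ (hj j)
    have hwj := hw _ (hj j)
    rw [hentry, circleIntegral_mul_prod_div_prod_succ hrb.le (hg j j)
      (fun k hk => hw_sphere k (Icc_subset_Icc_right j.2.le hk)) hwj]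
    simp only [hg_def, inv_mul_cancel₀ hbj, one_zpow, one_mul]
    rw [prod_one_sub_mul_div_one_sub_div_inv hbj fun k hk =>
      ne_of_mem_of_not_mem (ball_subset_closedBall hwj) (ha k hk)]
    field_simp
  exact ⟨hzero, hdiag, by rw [Matrix.det_of_isLowerTriangular _ hzero]; simp [hdiag]⟩

/-- The matrix `F_b` is lower triangular with unit diagonal, hence `det F_b = 1`. -/
theorem Fb_lower_triangular_unit_diag
    (N : ℕ) (hN : 1 ≤ N)
    (m : ℕ)
    (a b : ℕ → ℝ)
    (ha : ∀ i, 1 ≤ i → i ≤ m → 0 ≤ a i ∧ a i ≤ 1)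
    (hb : ∀ j, 1 ≤ j → j ≤ N → 0 < b j ∧ b j ≤ 1)
    (hab : ∀ i j, 1 ≤ i → i ≤ m → 1 ≤ j → j ≤ N → 0 < a i * b j ∧ a i * b j < 1)
    (x : ℕ → ℤ)
    (hx : ∀ i j, 1 ≤ i → i ≤ j → j ≤ N → x i ≤ x j)
    (p : ℕ) (hp : 1 ≤ p)
    (n : ℕ → ℕ) (hn0 : n 0 = 0) (hnp : n p = N)
    (hmono : ∀ k l, k ≤ p → l ≤ p → k < l → n k < n l)
    (h : ℕ → ℤ)
    (hfun : ℕ → ℤ)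
    (hhfun : ∀ k j, 1 ≤ k → k ≤ p → n (k - 1) < j → j ≤ n k → hfun j = h k)
    -- the contour `γ_b`: a circle of center `cb` and radius `rb` encircling all points
    -- `1/b_k` and none of the points `0, a_1, …, a_m`
    (cb : ℂ) (rb : ℝ) (hrb : 0 < rb)
    (hγb_in : ∀ k, 1 ≤ k → k ≤ N → ‖((b k : ℂ))⁻¹ - cb‖ < rb)
    (hγb_out0 : rb < ‖cb‖)
    (hγb_outa : ∀ k, 1 ≤ k → k ≤ m → rb < ‖(a k : ℂ) - cb‖) :
    ∀ Fb : Matrix (Fin N) (Fin N) ℂ,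
      (Fb = Matrix.of fun i j : Fin N =>
        (2 * (Real.pi : ℂ) * Complex.I)⁻¹ *
          ∮ z in C(cb, rb),
            (z * (b (j.1 + 1) : ℂ)) ^ (hfun (j.1 + 1) - 1)
              * (z * (b (i.1 + 1) : ℂ)) ^ (-(x (i.1 + 1)))
              * ((∏ k ∈ Finset.Icc 1 j.1, (z - ((b k : ℂ))⁻¹))
                  / ∏ k ∈ Finset.Icc 1 (i.1 + 1), (z - ((b k : ℂ))⁻¹))
              * ∏ k ∈ Finset.Icc 1 m,
                  ((1 - (a k : ℂ) * (b (j.1 + 1) : ℂ)) / (1 - (a k : ℂ) / z))) →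
      (∀ i j : Fin N, i < j → Fb i j = 0) ∧ (∀ j : Fin N, Fb j j = 1)
        ∧ Matrix.det Fb = 1 :=
  Fb_lower_triangular_unit_diag_general N m a b x hfun cb rb hrb hγb_in hγb_out0 hγb_outa
end

section
/- Define J_{b,b}(i,j) = (1/(2πi)^4)∮ dζ ∮ dω ∮ dz ∮ dw G(z | [n],[m],h−1) G(w | [N]∖[n],[M]∖[m],H−h) / (G(ζ | [i],[m],h−1) G(ω | [N]∖[j−1],[M]∖[m],H−h) (z−w)(z−ζ)(w−ω)), where the four contours are simple closed counterclockwise curves, each encircling all of the points 1/b_1, …, 1/b_N and none of the points 0, a_1, …, a_M, nested so that the z-contour contains the w-contour, which contains the ζ-contour, which contains the ω-contour. Then for all 1 ≤ i,j ≤ N, J_{b,b}(i,j) = 1{i = j and i ≤ n}. -/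
/-!
Write `G_z, G_w, G_ζ, G_ω` for the four `G`-factors of the integrand. The integrals are computed
from the inside out by residues. The `w`-integral sees only the pole `w = ω` and the `z`-integral
the poles `ω` and `ζ`, which leaves `G_w(ω) / G_ω(ω)` times the divided difference
`(G_z(ω) - G_z(ζ)) / (ω - ζ)`. If `j > n` the quotient `G_w / G_ω` is the polynomial
`∏_{n<k<j} (ω - 1/b_k)` and the `ω`-integral vanishes. If `j ≤ n` it is
`1 / ∏_{j≤k≤n} (ω - 1/b_k)`, which decays at infinity, and since `ζ` lies outside the `ω`-circle
the `ω`-integral is `2πi G_z(ζ) / ∏_{j≤k≤n} (ζ - 1/b_k)`. What remains in `ζ` is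
`∏_{k<j} (ζ - 1/b_k) / ∏_{k≤i} (ζ - 1/b_k)`: a polynomial if `i < j`, `O(ζ⁻²)` at infinity if
`i > j`, and `1 / (ζ - 1/b_i)` if `i = j`.
-/

/-- The function `G(z | S, T, h) = z^h ∏_{k∈S}(z - 1/b_k) ∏_{k∈T}(1 - a_k/z)⁻¹`. -/
noncomputable def GST (a b : ℕ → ℝ) (S T : Finset ℕ) (h : ℤ) (z : ℂ) : ℂ :=
  z ^ h * (∏ k ∈ S, (z - ((b k : ℂ))⁻¹)) * ∏ k ∈ T, (1 - (a k : ℂ) / z)⁻¹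

open Complex Metric Filter Finset
open scoped Real

namespace Complex

variable {f : ℂ → ℂ} {c : ℂ} {r : ℝ}

theorem _root_.DifferentiableOn.circleIntegral_eq_zero (hf : DifferentiableOn ℂ f (closedBall c r))
    (hr : 0 ≤ r) : ∮ z in C(c, r), f z = 0 :=
  (hf.mono closure_ball_subset_closedBall).diffContOnCl.circleIntegral_eq_zero hr

theorem _root_.DifferentiableOn.circleIntegral_div_sub (hf : DifferentiableOn ℂ f (closedBall c r))
    {w : ℂ} (hw : w ∈ ball c r) : ∮ z in C(c, r), f z / (z - w) = 2 * π * I * f w :=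
  circleIntegral_div_sub_of_differentiable_on_off_countable Set.countable_empty hw hf.continuousOn
    fun _ hz => hf.differentiableAt (closedBall_mem_nhds_of_mem hz.1)

theorem _root_.DifferentiableOn.circleIntegral_div_sub_mul_sub
    (hf : DifferentiableOn ℂ f (closedBall c r)) {p q : ℂ} (hp : p ∈ ball c r) (hq : q ∈ ball c r)
    (hpq : p ≠ q) :
    ∮ z in C(c, r), f z / ((z - p) * (z - q)) = 2 * π * I * ((f p - f q) / (p - q)) := by
  have hr : 0 ≤ r := (pos_of_mem_ball hp).le
  have hcont : ContinuousOn f (sphere c r) := hf.continuousOn.mono sphere_subset_closedBall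
  have hne : ∀ {w}, w ∈ ball c r → ∀ z ∈ sphere c r, z - w ≠ 0 := fun hw z hz =>
    sub_ne_zero.2 (sphere_disjoint_ball.ne_of_mem hz hw)
  have hint : ∀ {w}, w ∈ ball c r → CircleIntegrable (fun z => f z / (z - w)) c r := fun hw =>
    (hcont.div (by fun_prop) (hne hw)).circleIntegrable hr
  have hsplit : Set.EqOn (fun z => f z / ((z - p) * (z - q)))
      (fun z => (p - q)⁻¹ * (f z / (z - p) - f z / (z - q))) (sphere c r) := fun z hz => by
    have := hne hp z hz; have := hne hq z hz; have := sub_ne_zero.2 hpq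
    field_simp; ring
  rw [circleIntegral.integral_congr hr hsplit, circleIntegral.integral_const_mul,
    circleIntegral.integral_sub (hint hp) (hint hq), hf.circleIntegral_div_sub hp,
    hf.circleIntegral_div_sub hq]
  ring

variable {ι : Type*} {s : Finset ι} {p : ι → ℂ}

theorem prod_sub_ne_zero_of_mem_sphere (hp : ∀ k ∈ s, p k ∈ ball c r) {z : ℂ}
    (hz : z ∈ sphere c r) : ∏ k ∈ s, (z - p k) ≠ 0 :=
  prod_ne_zero_iff.2 fun k hk => sub_ne_zero.2 (sphere_disjoint_ball.ne_of_mem hz (hp k hk))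

theorem circleIntegral_prod_sub_inv_eq_zero (hs : 2 ≤ #s) (hp : ∀ k ∈ s, p k ∈ ball c r) :
    ∮ z in C(c, r), (∏ k ∈ s, (z - p k))⁻¹ = 0 := by
  obtain ⟨k₀, hk₀⟩ : s.Nonempty := card_pos.1 (by omega)
  have hr : 0 < r := pos_of_mem_ball (hp k₀ hk₀)
  have hdiff : ∀ z ∉ ball c r, DifferentiableAt ℂ (fun z => (∏ k ∈ s, (z - p k))⁻¹) z :=
    fun z hz => (DifferentiableAt.fun_finsetProd fun k _ => differentiableAt_id.sub_const _).inv
      (prod_ne_zero_iff.2 fun k hk => sub_ne_zero.2 fun h => hz (h ▸ hp k hk))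
  -- the integral does not depend on the radius `R ≥ r`, and is `O(1/R)` as `R → ∞`
  have hbound : ∀ R, 2 * r + 2 ≤ R → ‖∮ z in C(c, r), (∏ k ∈ s, (z - p k))⁻¹‖ ≤ 8 * π / R := by
    intro R hR
    have hR0 : 0 < R := by linarith
    rw [← circleIntegral_eq_of_differentiable_on_annulus_off_countable hr (by linarith)
      Set.countable_empty (fun z hz => (hdiff z hz.2).continuousAt.continuousWithinAt)
      fun z hz => hdiff z fun h => hz.1.2 (ball_subset_closedBall h)]
    have hfar : ∀ z ∈ sphere c R, ∀ k ∈ s, R / 2 ≤ ‖z - p k‖ := fun z hz k hk => by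
      have h1 := mem_ball_iff_norm.1 (hp k hk)
      have h2 := mem_sphere_iff_norm.1 hz
      have h3 := norm_sub_norm_le (z - c) (p k - c)
      rw [sub_sub_sub_cancel_right] at h3
      linarith
    calc ‖∮ z in C(c, R), (∏ k ∈ s, (z - p k))⁻¹‖ ≤ 2 * π * R * ((R / 2) ^ 2)⁻¹ := by
          refine circleIntegral.norm_integral_le_of_norm_le_const (by linarith) fun z hz => ?_
          rw [norm_inv, norm_prod]
          refine inv_anti₀ (by positivity) ?_
          calc (R / 2) ^ 2 ≤ (R / 2) ^ #s := pow_le_pow_right₀ (by linarith) hs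
            _ = ∏ _k ∈ s, R / 2 := (prod_const _).symm
            _ ≤ ∏ k ∈ s, ‖z - p k‖ :=
              prod_le_prod (fun _ _ => by linarith) fun k hk => hfar z hz k hk
      _ = 8 * π / R := by field_simp; ring
  exact norm_le_zero_iff.1 <| ge_of_tendsto (tendsto_const_nhds.div_atTop tendsto_id)
    (eventually_ge_atTop (2 * r + 2) |>.mono hbound)

theorem circleIntegral_prod_sub_inv (hs : s.Nonempty) (hp : ∀ k ∈ s, p k ∈ ball c r) :
    ∮ z in C(c, r), (∏ k ∈ s, (z - p k))⁻¹ = if #s = 1 then 2 * π * I else 0 := by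
  split_ifs with h1
  · obtain ⟨k, rfl⟩ := card_eq_one.1 h1
    simp only [prod_singleton]
    exact circleIntegral.integral_sub_inv_of_mem_ball (hp k (mem_singleton_self k))
  · exact circleIntegral_prod_sub_inv_eq_zero (by have := hs.card_pos; omega) hp

theorem circleIntegral_inv_sub_mul_prod_sub {ζ : ℂ} (hζ : ζ ∉ closedBall c r) (hs : s.Nonempty)
    (hp : ∀ k ∈ s, p k ∈ ball c r) :
    ∮ z in C(c, r), ((z - ζ) * ∏ k ∈ s, (z - p k))⁻¹ = -(2 * π * I * (∏ k ∈ s, (ζ - p k))⁻¹) := by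
  classical
  obtain ⟨k₀, hk₀⟩ := hs
  have hr : 0 ≤ r := (pos_of_mem_ball (hp k₀ hk₀)).le
  have hζz : ∀ z ∈ sphere c r, z - ζ ≠ 0 := fun z hz =>
    sub_ne_zero.2 fun h => hζ (h ▸ sphere_subset_closedBall hz)
  suffices ∀ t ⊆ s, ∮ z in C(c, r), ((z - ζ) * ∏ k ∈ t, (z - p k))⁻¹
      = 2 * π * I * ((if t = ∅ then 1 else 0) - (∏ k ∈ t, (ζ - p k))⁻¹) by
    rw [this s Finset.Subset.rfl, if_neg (ne_empty_of_mem hk₀)]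
    ring
  intro t ht
  induction t using Finset.cons_induction with
  | empty =>
    simp only [prod_empty, mul_one, if_pos, inv_one, sub_self, mul_zero]
    exact ((differentiableOn_id.sub_const ζ).inv fun z hz =>
      sub_ne_zero.2 fun h => hζ (h ▸ hz)).circleIntegral_eq_zero hr
  | cons a t hat ih =>
    have hpt : ∀ k ∈ cons a t hat, p k ∈ ball c r := fun k hk => hp k (ht hk)
    have hpa : p a ∈ ball c r := hpt a (mem_cons_self a t)
    have hζa : ζ - p a ≠ 0 := sub_ne_zero.2 fun h => hζ (h ▸ ball_subset_closedBall hpa)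
    have hprod : ∀ u ⊆ cons a t hat, ∀ z ∈ sphere c r, ∏ k ∈ u, (z - p k) ≠ 0 :=
      fun u hu z hz => prod_sub_ne_zero_of_mem_sphere (fun k hk => hpt k (hu hk)) hz
    have hsplit : Set.EqOn (fun z => ((z - ζ) * ∏ k ∈ cons a t hat, (z - p k))⁻¹)
        (fun z => (ζ - p a)⁻¹ * (((z - ζ) * ∏ k ∈ t, (z - p k))⁻¹
          - (∏ k ∈ cons a t hat, (z - p k))⁻¹)) (sphere c r) := fun z hz => by
      have := hζz z hz; have := hprod _ (subset_cons hat) z hz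
      have := sub_ne_zero.2 (sphere_disjoint_ball.ne_of_mem hz hpa)
      simp only [prod_cons]
      field_simp
      ring
    have hint₁ : CircleIntegrable (fun z => ((z - ζ) * ∏ k ∈ t, (z - p k))⁻¹) c r :=
      (ContinuousOn.inv₀ (by fun_prop) fun z hz =>
        mul_ne_zero (hζz z hz) (hprod _ (subset_cons hat) z hz)).circleIntegrable hr
    have hint₂ : CircleIntegrable (fun z => (∏ k ∈ cons a t hat, (z - p k))⁻¹) c r :=
      (ContinuousOn.inv₀ (by fun_prop) (hprod _ Finset.Subset.rfl)).circleIntegrable hr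
    rw [circleIntegral.integral_congr hr hsplit, circleIntegral.integral_const_mul,
      circleIntegral.integral_sub hint₁ hint₂, ih ((subset_cons hat).trans ht),
      circleIntegral_prod_sub_inv (cons_nonempty hat) hpt, card_cons, prod_cons]
    simp only [add_eq_right, card_eq_zero, cons_ne_empty, if_false]
    split_ifs <;> field_simp <;> ring

theorem _root_.DifferentiableOn.circleIntegral_sub_div_mul_prod_sub
    (hf : DifferentiableOn ℂ f (closedBall c r)) {ζ : ℂ} (hζ : ζ ∉ closedBall c r)
    (hs : s.Nonempty) (hp : ∀ k ∈ s, p k ∈ ball c r) :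
    ∮ z in C(c, r), (f z * (∏ k ∈ s, (z - p k)) - f ζ * ∏ k ∈ s, (ζ - p k))
        / ((z - ζ) * ∏ k ∈ s, (z - p k)) = 2 * π * I * f ζ := by
  obtain ⟨k₀, hk₀⟩ := hs
  have hr : 0 ≤ r := (pos_of_mem_ball (hp k₀ hk₀)).le
  have hζz : ∀ z ∈ closedBall c r, z - ζ ≠ 0 := fun z hz => sub_ne_zero.2 fun h => hζ (h ▸ hz)
  have hQζ : ∏ k ∈ s, (ζ - p k) ≠ 0 := prod_ne_zero_iff.2 fun k hk =>
    sub_ne_zero.2 fun h => hζ (h ▸ ball_subset_closedBall (hp k hk))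
  have hsplit : Set.EqOn (fun z => (f z * (∏ k ∈ s, (z - p k)) - f ζ * ∏ k ∈ s, (ζ - p k))
        / ((z - ζ) * ∏ k ∈ s, (z - p k)))
      (fun z => f z / (z - ζ) - f ζ * (∏ k ∈ s, (ζ - p k)) * ((z - ζ) * ∏ k ∈ s, (z - p k))⁻¹)
      (sphere c r) := fun z hz => by
    have := hζz z (sphere_subset_closedBall hz); have := prod_sub_ne_zero_of_mem_sphere hp hz
    dsimp only
    generalize ∏ k ∈ s, (z - p k) = Q at *
    field_simp
  have hdiv : DifferentiableOn ℂ (fun z => f z / (z - ζ)) (closedBall c r) :=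
    hf.div (differentiableOn_id.sub_const ζ) hζz
  have hcont : ContinuousOn
      (fun z => f ζ * (∏ k ∈ s, (ζ - p k)) * ((z - ζ) * ∏ k ∈ s, (z - p k))⁻¹) (sphere c r) :=
    continuousOn_const.mul <| ContinuousOn.inv₀ (by fun_prop) fun z hz =>
      mul_ne_zero (hζz z (sphere_subset_closedBall hz)) (prod_sub_ne_zero_of_mem_sphere hp hz)
  rw [circleIntegral.integral_congr hr hsplit, circleIntegral.integral_sub
    (hdiv.continuousOn.mono sphere_subset_closedBall |>.circleIntegrable hr)
    (hcont.circleIntegrable hr),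
    hdiv.circleIntegral_eq_zero hr, circleIntegral.integral_const_mul,
    circleIntegral_inv_sub_mul_prod_sub hζ ⟨k₀, hk₀⟩ hp]
  field_simp
  ring

theorem circleIntegral_prod_Ico_div_prod_Icc {p : ℕ → ℂ} {a i j : ℕ} (haj : a ≤ j) (hr : 0 ≤ r)
    (hp : ∀ k ∈ Ico a j ∪ Icc a i, p k ∈ ball c r) :
    ∮ z in C(c, r), (∏ k ∈ Ico a j, (z - p k)) / ∏ k ∈ Icc a i, (z - p k)
      = if i = j then 2 * π * I else 0 := by
  have hne : ∀ u ⊆ Ico a j ∪ Icc a i, ∀ z ∈ sphere c r, ∏ k ∈ u, (z - p k) ≠ 0 :=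
    fun u hu z hz => prod_sub_ne_zero_of_mem_sphere (fun k hk => hp k (hu hk)) hz
  rcases lt_or_ge i j with hij | hji
  · have hsub : Icc a i ⊆ Ico a j := fun k hk => by simp only [mem_Icc, mem_Ico] at hk ⊢; omega
    have hquot : Set.EqOn (fun z => (∏ k ∈ Ico a j, (z - p k)) / ∏ k ∈ Icc a i, (z - p k))
        (fun z => ∏ k ∈ Ico a j \ Icc a i, (z - p k)) (sphere c r) := fun z hz => by
      dsimp only
      rw [← prod_sdiff hsub, mul_div_cancel_right₀ _ (hne _ subset_union_right z hz)]
    rw [circleIntegral.integral_congr hr hquot, if_neg hij.ne,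
      (show DifferentiableOn ℂ (fun z => ∏ k ∈ Ico a j \ Icc a i, (z - p k)) (closedBall c r) by
        fun_prop).circleIntegral_eq_zero hr]
  · have hdiff : Icc a i \ Ico a j = Icc j i := by
      ext k
      simp only [Finset.mem_sdiff, mem_Icc, mem_Ico]
      omega
    have hsub : Ico a j ⊆ Icc a i := fun k hk => by simp only [mem_Icc, mem_Ico] at hk ⊢; omega
    have hquot : Set.EqOn (fun z => (∏ k ∈ Ico a j, (z - p k)) / ∏ k ∈ Icc a i, (z - p k))
        (fun z => (∏ k ∈ Icc j i, (z - p k))⁻¹) (sphere c r) := fun z hz => by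
      dsimp only
      rw [← prod_sdiff hsub, hdiff, div_mul_cancel_right₀ (hne _ subset_union_left z hz)]
    rw [circleIntegral.integral_congr hr hquot, circleIntegral_prod_sub_inv (nonempty_Icc.2 hji)
      fun k hk => hp k (mem_union_right _ (by simp only [mem_Icc] at hk ⊢; omega)), Nat.card_Icc]
    congr 1
    simp only [eq_iff_iff]
    omega

theorem circleIntegral_circleIntegral_nested {F G : ℂ → ℂ} {cz cw : ℂ} {rz rw : ℝ}
    (hF : DifferentiableOn ℂ F (closedBall cz rz)) (hG : DifferentiableOn ℂ G (closedBall cw rw))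
    (hwz : closedBall cw rw ⊆ ball cz rz) {ζ ω : ℂ} (hζ : ζ ∈ ball cz rz) (hω : ω ∈ ball cw rw)
    (hωζ : ω ≠ ζ) (d : ℂ) :
    ∮ z in C(cz, rz), ∮ w in C(cw, rw), F z * G w / (d * (z - w) * (z - ζ) * (w - ω))
      = (2 * π * I) ^ 2 * (G ω / d * ((F ω - F ζ) / (ω - ζ))) := by
  have hinner : Set.EqOn (fun z => ∮ w in C(cw, rw), F z * G w / (d * (z - w) * (z - ζ) * (w - ω)))
      (fun z => 2 * π * I * (G ω / d) * (F z / ((z - ω) * (z - ζ)))) (sphere cz rz) :=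
    fun z hz => by
      have hzw : ∀ w ∈ closedBall cw rw, z - w ≠ 0 := fun w hw =>
        sub_ne_zero.2 (sphere_disjoint_ball.ne_of_mem hz (hwz hw))
      have hdiff : DifferentiableOn ℂ (fun w => F z / (d * (z - ζ)) * (G w / (z - w)))
          (closedBall cw rw) :=
        (hG.div ((differentiableOn_const z).sub differentiableOn_id) hzw).const_mul _
      have hform : ∀ w, F z * G w / (d * (z - w) * (z - ζ) * (w - ω))
          = F z / (d * (z - ζ)) * (G w / (z - w)) / (w - ω) := fun w => by
        simp only [div_eq_mul_inv, mul_inv]; ring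
      simp only [hform]
      rw [hdiff.circleIntegral_div_sub hω]
      simp only [div_eq_mul_inv, mul_inv]
      ring
  rw [circleIntegral.integral_congr (pos_of_mem_ball hζ).le hinner,
    circleIntegral.integral_const_mul,
    hF.circleIntegral_div_sub_mul_sub (hwz (ball_subset_closedBall hω)) hζ hωζ]
  ring

end Complex

theorem Finset.prod_Ico_mul_prod_Icc {M : Type*} [CommMonoid M] (f : ℕ → M) {a b c : ℕ}
    (hab : a ≤ b) (hbc : b ≤ c + 1) :
    (∏ k ∈ Ico a b, f k) * ∏ k ∈ Icc b c, f k = ∏ k ∈ Icc a c, f k := by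
  rw [← Ico_add_one_right_eq_Icc, ← Ico_add_one_right_eq_Icc, prod_Ico_consecutive f hab hbc]

section GST

variable {a b : ℕ → ℝ} {S T : Finset ℕ} {h : ℤ}

def GSTSingularSet (a : ℕ → ℝ) (T : Finset ℕ) : Set ℂ :=
  insert 0 ((fun k => (a k : ℂ)) '' T)

theorem notMem_GSTSingularSet_iff {x : ℂ} :
    x ∉ GSTSingularSet a T ↔ x ≠ 0 ∧ ∀ k ∈ T, x ≠ a k := by
  simp [GSTSingularSet, eq_comm]

theorem disjoint_closedBall_GSTSingularSet {c : ℂ} {r : ℝ} (h0 : r < ‖c‖)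
    (ha : ∀ k ∈ T, r < ‖(a k : ℂ) - c‖) : Disjoint (closedBall c r) (GSTSingularSet a T) := by
  refine Set.disjoint_left.2 fun x hx => notMem_GSTSingularSet_iff.2 ⟨?_, fun k hk => ?_⟩ <;>
    rintro rfl <;> rw [mem_closedBall_iff_norm] at hx
  · rw [zero_sub, norm_neg] at hx
    linarith
  · linarith [ha k hk]

theorem GST_eq_mul_prod (a b : ℕ → ℝ) (S T : Finset ℕ) (h : ℤ) (x : ℂ) :
    GST a b S T h x = GST a b ∅ T h x * ∏ k ∈ S, (x - ((b k : ℂ))⁻¹) := by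
  simp only [GST, prod_empty]
  ring

theorem one_sub_div_ne_zero_s17 {K : Type*} [DivisionRing K] {x y : K} (hx : x ≠ 0) (hxy : x ≠ y) :
    1 - y / x ≠ 0 :=
  sub_ne_zero.2 fun h => hxy ((div_eq_one_iff_eq hx).1 h.symm).symm

theorem differentiableOn_GST {U : Set ℂ} (hU : Disjoint U (GSTSingularSet a T)) :
    DifferentiableOn ℂ (GST a b S T h) U := by
  have hx : ∀ x ∈ U, x ≠ 0 ∧ ∀ k ∈ T, x ≠ a k := fun x hx =>
    notMem_GSTSingularSet_iff.1 (Set.disjoint_left.1 hU hx)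
  refine ((differentiableOn_id.zpow (Or.inl fun x hxU => (hx x hxU).1)).mul
    (by fun_prop)).mul (DifferentiableOn.fun_finsetProd fun k hk => ?_)
  exact ((differentiableOn_const 1).sub ((differentiableOn_const _).div differentiableOn_id
    fun x hxU => (hx x hxU).1)).inv fun x hxU =>
      one_sub_div_ne_zero_s17 (hx x hxU).1 ((hx x hxU).2 k hk)

theorem GST_ne_zero {x : ℂ} (hx : x ∉ GSTSingularSet a T) (hS : ∀ k ∈ S, x ≠ ((b k : ℂ))⁻¹) :
    GST a b S T h x ≠ 0 := by
  obtain ⟨hx0, hxa⟩ := notMem_GSTSingularSet_iff.1 hx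
  refine mul_ne_zero (mul_ne_zero (zpow_ne_zero _ hx0) ?_) ?_
  · exact prod_ne_zero_iff.2 fun k hk => sub_ne_zero.2 (hS k hk)
  · exact prod_ne_zero_iff.2 fun k hk => inv_ne_zero (one_sub_div_ne_zero_s17 hx0 (hxa k hk))

end GST

section Stages

variable {a b : ℕ → ℝ} {T₁ T₂ : Finset ℕ} {h₁ h₂ : ℤ} {c : ℂ} {r : ℝ}

theorem circleIntegral_GST_div_mul_slope_of_le {n N j : ℕ} (hj : 1 ≤ j) (hjn : j ≤ n) (hnN : n ≤ N)
    (hβ : ∀ k ∈ Icc 1 N, ((b k : ℂ))⁻¹ ∈ ball c r)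
    (hU₁ : Disjoint (closedBall c r) (GSTSingularSet a T₁))
    (hU₂ : Disjoint (closedBall c r) (GSTSingularSet a T₂)) {ζ : ℂ} (hζ : ζ ∉ closedBall c r)
    (d : ℂ) :
    ∮ ω in C(c, r), GST a b (Icc (n + 1) N) T₂ h₂ ω / (d * GST a b (Icc j N) T₂ h₂ ω)
        * ((GST a b (Icc 1 n) T₁ h₁ ω - GST a b (Icc 1 n) T₁ h₁ ζ) / (ω - ζ))
      = 2 * π * I * (GST a b (Ico 1 j) T₁ h₁ ζ / d) := by
  have hβ' : ∀ k ∈ Icc j n, ((b k : ℂ))⁻¹ ∈ ball c r := fun k hk =>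
    hβ k (by simp only [mem_Icc] at hk ⊢; omega)
  have hr : 0 ≤ r := (pos_of_mem_ball (hβ' j (by simp [hjn]))).le
  have hGz : ∀ x, GST a b (Icc 1 n) T₁ h₁ x
      = GST a b (Ico 1 j) T₁ h₁ x * ∏ k ∈ Icc j n, (x - ((b k : ℂ))⁻¹) := fun x => by
    rw [GST_eq_mul_prod, GST_eq_mul_prod _ _ (Ico 1 j), ← prod_Ico_mul_prod_Icc _ hj (by omega)]
    ring
  have hGo : ∀ x, GST a b (Icc j N) T₂ h₂ x
      = GST a b (Icc (n + 1) N) T₂ h₂ x * ∏ k ∈ Icc j n, (x - ((b k : ℂ))⁻¹) := fun x => by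
    rw [GST_eq_mul_prod, GST_eq_mul_prod _ _ (Icc (n + 1) N), ← Ico_add_one_right_eq_Icc j n,
      ← prod_Ico_mul_prod_Icc _ (b := n + 1) (by omega) (by omega)]
    ring
  have hintegrand : Set.EqOn
      (fun ω => GST a b (Icc (n + 1) N) T₂ h₂ ω / (d * GST a b (Icc j N) T₂ h₂ ω)
        * ((GST a b (Icc 1 n) T₁ h₁ ω - GST a b (Icc 1 n) T₁ h₁ ζ) / (ω - ζ)))
      (fun ω => d⁻¹ * ((GST a b (Ico 1 j) T₁ h₁ ω * (∏ k ∈ Icc j n, (ω - ((b k : ℂ))⁻¹))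
          - GST a b (Ico 1 j) T₁ h₁ ζ * ∏ k ∈ Icc j n, (ζ - ((b k : ℂ))⁻¹))
        / ((ω - ζ) * ∏ k ∈ Icc j n, (ω - ((b k : ℂ))⁻¹)))) (sphere c r) := fun ω hω => by
    have hGw : GST a b (Icc (n + 1) N) T₂ h₂ ω ≠ 0 :=
      GST_ne_zero (Set.disjoint_left.1 hU₂ (sphere_subset_closedBall hω)) fun k hk =>
        (sphere_disjoint_ball.ne_of_mem hω (hβ k (by simp only [mem_Icc] at hk ⊢; omega)))
    dsimp only
    rw [hGo, hGz, hGz]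
    field_simp
  rw [circleIntegral.integral_congr hr hintegrand, circleIntegral.integral_const_mul,
    (differentiableOn_GST hU₁).circleIntegral_sub_div_mul_prod_sub hζ
      (nonempty_Icc.2 hjn) hβ']
  ring

theorem circleIntegral_GST_div_mul_slope_of_lt {n N j : ℕ} (hnj : n < j) (hjN : j ≤ N)
    (hβ : ∀ k ∈ Icc 1 N, ((b k : ℂ))⁻¹ ∈ ball c r)
    (hU₁ : Disjoint (closedBall c r) (GSTSingularSet a T₁))
    (hU₂ : Disjoint (closedBall c r) (GSTSingularSet a T₂)) {ζ : ℂ} (hζ : ζ ∉ closedBall c r)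
    (d : ℂ) :
    ∮ ω in C(c, r), GST a b (Icc (n + 1) N) T₂ h₂ ω / (d * GST a b (Icc j N) T₂ h₂ ω)
        * ((GST a b (Icc 1 n) T₁ h₁ ω - GST a b (Icc 1 n) T₁ h₁ ζ) / (ω - ζ)) = 0 := by
  have hr : 0 ≤ r := (pos_of_mem_ball (hβ j (by simp only [mem_Icc]; omega))).le
  have hGw : ∀ x, GST a b (Icc (n + 1) N) T₂ h₂ x
      = GST a b (Icc j N) T₂ h₂ x * ∏ k ∈ Ico (n + 1) j, (x - ((b k : ℂ))⁻¹) := fun x => by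
    rw [GST_eq_mul_prod, GST_eq_mul_prod _ _ (Icc j N), ← prod_Ico_mul_prod_Icc _ hnj (by omega)]
    ring
  have hintegrand : Set.EqOn
      (fun ω => GST a b (Icc (n + 1) N) T₂ h₂ ω / (d * GST a b (Icc j N) T₂ h₂ ω)
        * ((GST a b (Icc 1 n) T₁ h₁ ω - GST a b (Icc 1 n) T₁ h₁ ζ) / (ω - ζ)))
      (fun ω => d⁻¹ * (∏ k ∈ Ico (n + 1) j, (ω - ((b k : ℂ))⁻¹))
        * ((GST a b (Icc 1 n) T₁ h₁ ω - GST a b (Icc 1 n) T₁ h₁ ζ) / (ω - ζ))) (sphere c r) :=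
    fun ω hω => by
      have hGo : GST a b (Icc j N) T₂ h₂ ω ≠ 0 :=
        GST_ne_zero (Set.disjoint_left.1 hU₂ (sphere_subset_closedBall hω)) fun k hk =>
          (sphere_disjoint_ball.ne_of_mem hω (hβ k (by simp only [mem_Icc] at hk ⊢; omega)))
      dsimp only
      rw [hGw]
      field_simp
  have hdiff : DifferentiableOn ℂ (fun ω => d⁻¹ * (∏ k ∈ Ico (n + 1) j, (ω - ((b k : ℂ))⁻¹))
      * ((GST a b (Icc 1 n) T₁ h₁ ω - GST a b (Icc 1 n) T₁ h₁ ζ) / (ω - ζ))) (closedBall c r) :=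
    (DifferentiableOn.const_mul (by fun_prop) _).mul
      (((differentiableOn_GST hU₁).sub_const _).div (differentiableOn_id.sub_const ζ)
        fun x hx => sub_ne_zero.2 fun h => hζ (h ▸ hx))
  rw [circleIntegral.integral_congr hr hintegrand, hdiff.circleIntegral_eq_zero hr]

theorem circleIntegral_GST_Ico_div_GST_Icc {h : ℤ} {i j : ℕ} (hj : 1 ≤ j) (hr : 0 ≤ r)
    (hβ : ∀ k ∈ Ico 1 j ∪ Icc 1 i, ((b k : ℂ))⁻¹ ∈ ball c r)
    (hU : Disjoint (sphere c r) (GSTSingularSet a T₁)) :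
    ∮ ζ in C(c, r), GST a b (Ico 1 j) T₁ h ζ / GST a b (Icc 1 i) T₁ h ζ
      = if i = j then 2 * π * I else 0 := by
  have hquot : Set.EqOn (fun ζ => GST a b (Ico 1 j) T₁ h ζ / GST a b (Icc 1 i) T₁ h ζ)
      (fun ζ => (∏ k ∈ Ico 1 j, (ζ - ((b k : ℂ))⁻¹)) / ∏ k ∈ Icc 1 i, (ζ - ((b k : ℂ))⁻¹))
      (sphere c r) := fun ζ hζ => by
    dsimp only
    rw [GST_eq_mul_prod, GST_eq_mul_prod _ _ (Icc 1 i), mul_div_mul_left _ _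
      (GST_ne_zero (S := ∅) (Set.disjoint_left.1 hU hζ) (by simp))]
  rw [circleIntegral.integral_congr hr hquot, circleIntegral_prod_Ico_div_prod_Icc hj hr hβ]

end Stages

theorem circleIntegral_GST_nested_eq_indicator {a b : ℕ → ℝ} {T₁ T₂ : Finset ℕ} {h₁ h₂ : ℤ}
    {n N i j : ℕ} (hnN : n ≤ N) (hiN : i ≤ N) (hj : 1 ≤ j) (hjN : j ≤ N)
    {cz cw cζ cω : ℂ} {rz rw rζ rω : ℝ} (hzw : closedBall cw rw ⊆ ball cz rz)
    (hwζ : closedBall cζ rζ ⊆ ball cw rw) (hζω : closedBall cω rω ⊆ ball cζ rζ)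
    (hβ : ∀ k ∈ Icc 1 N, ((b k : ℂ))⁻¹ ∈ ball cω rω)
    (hz : Disjoint (closedBall cz rz) (GSTSingularSet a T₁))
    (hw : Disjoint (closedBall cw rw) (GSTSingularSet a T₂)) :
    ∮ ζ in C(cζ, rζ), ∮ ω in C(cω, rω), ∮ z in C(cz, rz), ∮ w in C(cw, rw),
        GST a b (Icc 1 n) T₁ h₁ z * GST a b (Icc (n + 1) N) T₂ h₂ w
          / (GST a b (Icc 1 i) T₁ h₁ ζ * GST a b (Icc j N) T₂ h₂ ω
            * (z - w) * (z - ζ) * (w - ω))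
      = (2 * π * I) ^ 4 * if i = j ∧ i ≤ n then 1 else 0 := by
  have hζw : closedBall cζ rζ ⊆ closedBall cw rw := hwζ.trans ball_subset_closedBall
  have hwz : closedBall cw rw ⊆ closedBall cz rz := hzw.trans ball_subset_closedBall
  have hωw : closedBall cω rω ⊆ closedBall cw rw := (hζω.trans ball_subset_closedBall).trans hζw
  have hrω : 0 ≤ rω := (pos_of_mem_ball (hβ j (by simp only [mem_Icc]; omega))).le
  have hrζ : 0 ≤ rζ := (pos_of_mem_ball (hζω (mem_closedBall_self hrω))).le
  have hζout : ∀ ζ ∈ sphere cζ rζ, ζ ∉ closedBall cω rω := fun ζ hζ hζω' =>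
    sphere_disjoint_ball.ne_of_mem hζ (hζω hζω') rfl
  rw [circleIntegral.integral_congr hrζ fun ζ hζ => circleIntegral.integral_congr hrω fun ω hω =>
    circleIntegral_circleIntegral_nested (differentiableOn_GST hz) (differentiableOn_GST hw) hzw
      (hzw (hζw (sphere_subset_closedBall hζ))) 
      (hwζ (ball_subset_closedBall (hζω (sphere_subset_closedBall hω))))
      (fun h => hζout ζ hζ (h ▸ sphere_subset_closedBall hω)) _]
  simp only [circleIntegral.integral_const_mul]
  rcases le_or_gt j n with hjn | hnj
  · have hβζ : ∀ k ∈ Ico 1 j ∪ Icc 1 i, ((b k : ℂ))⁻¹ ∈ ball cζ rζ := fun k hk =>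
      hζω <| ball_subset_closedBall <|
        hβ k (by simp only [mem_union, mem_Ico, mem_Icc] at hk ⊢; omega)
    rw [circleIntegral.integral_congr hrζ fun ζ hζ => circleIntegral_GST_div_mul_slope_of_le hj hjn
        hnN hβ (hz.mono_left (hωw.trans hwz)) (hw.mono_left hωw) (hζout ζ hζ) _,
      circleIntegral.integral_const_mul, circleIntegral_GST_Ico_div_GST_Icc hj hrζ hβζ
        (hz.mono_left (sphere_subset_closedBall.trans (hζw.trans hwz)))]
    simp only [and_iff_left_of_imp fun h : i = j => h ▸ hjn]
    split_ifs <;> ring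
  · rw [circleIntegral.integral_congr hrζ fun ζ hζ => circleIntegral_GST_div_mul_slope_of_lt hnj
        hjN hβ (hz.mono_left (hωw.trans hwz)) (hw.mono_left hωw) (hζout ζ hζ) _,
      (differentiableOn_const 0).circleIntegral_eq_zero hrζ, if_neg (by omega)]
    ring

theorem Jbb_eq_indicator_general
    (N M : ℕ)
    (n m : ℕ) (hnN : n < N) (hmM : m < M)
    (h H : ℤ)
    (a b : ℕ → ℝ)
    -- the `z`-contour
    (cz : ℂ) (rz : ℝ)
    (hz_out0 : rz < ‖cz‖)
    (hz_outa : ∀ k, 1 ≤ k → k ≤ M → rz < ‖((a k : ℂ) - cz)‖)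
    -- the `w`-contour
    (cw : ℂ) (rw : ℝ)
    (hw_out0 : rw < ‖cw‖)
    (hw_outa : ∀ k, 1 ≤ k → k ≤ M → rw < ‖((a k : ℂ) - cw)‖)
    -- the `ζ`-contour
    (cζ : ℂ) (rζ : ℝ)
    -- the `ω`-contour
    (cω : ℂ) (rω : ℝ)
    (hω_in : ∀ k, 1 ≤ k → k ≤ N → ‖(((b k : ℂ))⁻¹ - cω)‖ < rω)
    -- nesting: z-contour ⊃ w-contour ⊃ ζ-contour ⊃ ω-contour
    (hzw : ‖(cz - cw)‖ + rw < rz)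
    (hwζ : ‖(cw - cζ)‖ + rζ < rw)
    (hζω : ‖(cζ - cω)‖ + rω < rζ)
    (i j : ℕ) (hiN : i ≤ N) (hj1 : 1 ≤ j) (hjN : j ≤ N) :
    ((2 * (Real.pi : ℂ) * Complex.I)⁻¹ ^ 4 *
        ∮ ζ in C(cζ, rζ), ∮ ω in C(cω, rω), ∮ z in C(cz, rz), ∮ w in C(cw, rw),
          GST a b (Finset.Icc 1 n) (Finset.Icc 1 m) (h - 1) z
            * GST a b (Finset.Icc (n + 1) N) (Finset.Icc (m + 1) M) (H - h) w
            / (GST a b (Finset.Icc 1 i) (Finset.Icc 1 m) (h - 1) ζ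
                * GST a b (Finset.Icc j N) (Finset.Icc (m + 1) M) (H - h) ω
                * (z - w) * (z - ζ) * (w - ω)))
      = if i = j ∧ i ≤ n then 1 else 0 := by
  have nested : ∀ {c c' : ℂ} {r r' : ℝ}, ‖c - c'‖ + r' < r → closedBall c' r' ⊆ ball c r :=
    fun h => closedBall_subset_ball' (by rwa [dist_comm, dist_eq_norm, add_comm])
  have hz : Disjoint (closedBall cz rz) (GSTSingularSet a (Icc 1 m)) :=
    disjoint_closedBall_GSTSingularSet hz_out0 fun k hk => by
      simp only [mem_Icc] at hk
      exact hz_outa k hk.1 (by omega)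
  have hw : Disjoint (closedBall cw rw) (GSTSingularSet a (Icc (m + 1) M)) :=
    disjoint_closedBall_GSTSingularSet hw_out0 fun k hk => by
      simp only [mem_Icc] at hk
      exact hw_outa k (by omega) hk.2
  have hβ : ∀ k ∈ Icc 1 N, ((b k : ℂ))⁻¹ ∈ ball cω rω := fun k hk =>
    mem_ball_iff_norm.2 (hω_in k (mem_Icc.1 hk).1 (mem_Icc.1 hk).2)
  rw [circleIntegral_GST_nested_eq_indicator hnN.le hiN hj1 hjN (nested hzw) (nested hwζ)
    (nested hζω) hβ hz hw, ← mul_assoc, ← mul_pow, inv_mul_cancel₀ two_pi_I_ne_zero, one_pow,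
    one_mul]

/-- The term `J_{b,b}` from the orthogonalization in the proof of Theorem 3.4 equals
`1{i = j, i ≤ n}`.  The four contours are counterclockwise circles encircling all the
points `1/b_k` and none of `0, a_1, …, a_M`, nested so that the `z`-contour contains
the `w`-contour, which contains the `ζ`-contour, which contains the `ω`-contour. -/
theorem Jbb_eq_indicator
    (N M : ℕ) (hN : 1 ≤ N) (hM : 1 ≤ M)
    (n m : ℕ) (hn1 : 1 ≤ n) (hnN : n < N) (hm1 : 1 ≤ m) (hmM : m < M)
    (h H : ℤ)
    (a b : ℕ → ℝ)
    (ha : ∀ i, 1 ≤ i → i ≤ M → 0 ≤ a i ∧ a i ≤ 1)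
    (hb : ∀ j, 1 ≤ j → j ≤ N → 0 < b j ∧ b j ≤ 1)
    (hab : ∀ i j, 1 ≤ i → i ≤ M → 1 ≤ j → j ≤ N → 0 < a i * b j ∧ a i * b j < 1)
    -- the `z`-contour
    (cz : ℂ) (rz : ℝ) (hrz : 0 < rz)
    (hz_in : ∀ k, 1 ≤ k → k ≤ N → ‖(((b k : ℂ))⁻¹ - cz)‖ < rz)
    (hz_out0 : rz < ‖cz‖)
    (hz_outa : ∀ k, 1 ≤ k → k ≤ M → rz < ‖((a k : ℂ) - cz)‖)
    -- the `w`-contour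
    (cw : ℂ) (rw : ℝ) (hrw : 0 < rw)
    (hw_in : ∀ k, 1 ≤ k → k ≤ N → ‖(((b k : ℂ))⁻¹ - cw)‖ < rw)
    (hw_out0 : rw < ‖cw‖)
    (hw_outa : ∀ k, 1 ≤ k → k ≤ M → rw < ‖((a k : ℂ) - cw)‖)
    -- the `ζ`-contour
    (cζ : ℂ) (rζ : ℝ) (hrζ : 0 < rζ)
    (hζ_in : ∀ k, 1 ≤ k → k ≤ N → ‖(((b k : ℂ))⁻¹ - cζ)‖ < rζ)
    (hζ_out0 : rζ < ‖cζ‖)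
    (hζ_outa : ∀ k, 1 ≤ k → k ≤ M → rζ < ‖((a k : ℂ) - cζ)‖)
    -- the `ω`-contour
    (cω : ℂ) (rω : ℝ) (hrω : 0 < rω)
    (hω_in : ∀ k, 1 ≤ k → k ≤ N → ‖(((b k : ℂ))⁻¹ - cω)‖ < rω)
    (hω_out0 : rω < ‖cω‖)
    (hω_outa : ∀ k, 1 ≤ k → k ≤ M → rω < ‖((a k : ℂ) - cω)‖)
    -- nesting: z-contour ⊃ w-contour ⊃ ζ-contour ⊃ ω-contour
    (hzw : ‖(cz - cw)‖ + rw < rz)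
    (hwζ : ‖(cw - cζ)‖ + rζ < rw)
    (hζω : ‖(cζ - cω)‖ + rω < rζ)
    (i j : ℕ) (hi1 : 1 ≤ i) (hiN : i ≤ N) (hj1 : 1 ≤ j) (hjN : j ≤ N) :
    ((2 * (Real.pi : ℂ) * Complex.I)⁻¹ ^ 4 *
        ∮ ζ in C(cζ, rζ), ∮ ω in C(cω, rω), ∮ z in C(cz, rz), ∮ w in C(cw, rw),
          GST a b (Finset.Icc 1 n) (Finset.Icc 1 m) (h - 1) z
            * GST a b (Finset.Icc (n + 1) N) (Finset.Icc (m + 1) M) (H - h) w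
            / (GST a b (Finset.Icc 1 i) (Finset.Icc 1 m) (h - 1) ζ
                * GST a b (Finset.Icc j N) (Finset.Icc (m + 1) M) (H - h) ω
                * (z - w) * (z - ζ) * (w - ω)))
      = if i = j ∧ i ≤ n then 1 else 0 :=
  Jbb_eq_indicator_general N M n m hnN hmM h H a b cz rz hz_out0 hz_outa cw rw hw_out0 hw_outa cζ rζ
    cω rω hω_in hzw hwζ hζω i j hiN hj1 hjN
end

section
/- Define N × N matrices A(i,j) = (1/2πi)∮_{γ_b} dζ [∏_{k=1}^{j−1}(ζ − 1/b_k) / ∏_{k=1}^{i}(ζ − 1/b_k)] (b_j ζ)^{1−h} ∏_{k=1}^{m}(1 − a_k/ζ)/(1 − a_k b_j) and B(i,j) = (1/2πi)∮_{γ_b} dω [∏_{k=1}^{j−1}(ω − 1/b_k) / ∏_{k=1}^{i}(ω − 1/b_k)] (b_i ω)^{h−H} ∏_{k=m+1}^{M}(1 − a_k/ω)/(1 − a_k b_i), where γ_b is a simple closed counterclockwise contour encircling all of the points 1/b_1, …, 1/b_N and none of the points 0, a_1, …, a_M. Then A(i,j) = B(i,j) = 0 whenever j > i, and A(i,i) =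 B(i,i) = 1 for all i; in particular A and B are lower triangular with unit diagonal and det A = det B = 1. -/
/-!
On `γ_b` the ratio `∏_{k<j}(ζ - 1/b_k) / ∏_{k≤i}(ζ - 1/b_k)` is the polynomial
`∏_{i<k<j}(ζ - 1/b_k)` when `j > i` and the simple pole `(ζ - 1/b_i)⁻¹` when `j = i`, while the
remaining factor of each integrand is holomorphic on the closed disc bounded by `γ_b`, its only
singularity being `0`. Hence the entries above the diagonal vanish by Cauchy's theorem, and a
diagonal entry is, by Cauchy's integral formula, that factor at `1/b_i`, where it equals `1`.
-/

open Complex Metric Finset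

theorem Finset.prod_Icc_one_div_prod_Icc_one {G : Type*} [CommGroupWithZero G] (f : ℕ → G)
    {i j : ℕ} (hij : i ≤ j) (hf : ∀ k ∈ Icc 1 i, f k ≠ 0) :
    (∏ k ∈ Icc 1 j, f k) / ∏ k ∈ Icc 1 i, f k = ∏ k ∈ Ioc i j, f k := by
  have hIcc (n : ℕ) : Icc 1 n = Ioc 0 n := Icc_add_one_left_eq_Ioc 0 n
  rw [div_eq_iff (prod_ne_zero_iff.2 hf), mul_comm, hIcc, hIcc,
    prod_Ioc_consecutive _ (Nat.zero_le i) hij]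

section ContourIntegrals

variable {c : ℂ} {R : ℝ} {w : ℕ → ℂ} {g : ℂ → ℂ}

theorem circleIntegral_prod_div_prod_mul_eq_zero {i j : ℕ} (hij : i < j)
    (hw : ∀ k ∈ Icc 1 (i + 1), w k ∈ ball c R) (hg : DifferentiableOn ℂ g (closedBall c R)) :
    (∮ ζ in C(c, R), (∏ k ∈ Icc 1 j, (ζ - w k)) / (∏ k ∈ Icc 1 (i + 1), (ζ - w k)) * g ζ) = 0 := by
  have hR : 0 < R := pos_of_mem_ball (hw (i + 1) (by simp))
  have hpoly : Set.EqOn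
      (fun ζ ↦ (∏ k ∈ Icc 1 j, (ζ - w k)) / (∏ k ∈ Icc 1 (i + 1), (ζ - w k)) * g ζ)
      (fun ζ ↦ (∏ k ∈ Ioc (i + 1) j, (ζ - w k)) * g ζ) (sphere c R) := fun ζ hζ ↦ by
    dsimp only
    rw [prod_Icc_one_div_prod_Icc_one _ (Nat.add_one_le_of_lt hij) fun k hk ↦
      sub_ne_zero.2 (sphere_disjoint_ball.ne_of_mem hζ (hw k hk))]
  rw [circleIntegral.integral_congr hR.le hpoly]
  refine (DifferentiableOn.diffContOnCl_ball ?_ subset_rfl).circleIntegral_eq_zero hR.le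
  exact (DifferentiableOn.fun_finsetProd fun k _ ↦ (differentiableOn_id.sub_const (w k))).mul hg

theorem two_pi_I_inv_mul_circleIntegral_prod_div_prod_mul (i : ℕ)
    (hw : ∀ k ∈ Icc 1 (i + 1), w k ∈ ball c R) (hg : DifferentiableOn ℂ g (closedBall c R)) :
    (2 * (Real.pi : ℂ) * I)⁻¹ *
        ∮ ζ in C(c, R), (∏ k ∈ Icc 1 i, (ζ - w k)) / (∏ k ∈ Icc 1 (i + 1), (ζ - w k)) * g ζ =
      g (w (i + 1)) := by
  have hR : 0 < R := pos_of_mem_ball (hw (i + 1) (by simp))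
  have hpole : Set.EqOn
      (fun ζ ↦ (∏ k ∈ Icc 1 i, (ζ - w k)) / (∏ k ∈ Icc 1 (i + 1), (ζ - w k)) * g ζ)
      (fun ζ ↦ (ζ - w (i + 1))⁻¹ • g ζ) (sphere c R) := fun ζ hζ ↦ by
    dsimp only
    have hne : ∀ k ∈ Icc 1 i, ζ - w k ≠ 0 := fun k hk ↦ sub_ne_zero.2
      (sphere_disjoint_ball.ne_of_mem hζ (hw k (Icc_subset_Icc_right i.le_succ hk)))
    rw [smul_eq_mul, ← inv_div, prod_Icc_one_div_prod_Icc_one _ (Nat.le_succ i) hne, Nat.Ioc_succ_singleton,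
      prod_singleton]
  rw [circleIntegral.integral_congr hR.le hpole, ← smul_eq_mul,
    (hg.diffContOnCl_ball subset_rfl).two_pi_i_inv_smul_circleIntegral_sub_inv_smul
      (hw (i + 1) (by simp))]

end ContourIntegrals

theorem Matrix.unitLowerTriangular_of_eq_circleIntegral {N : ℕ} {c : ℂ} {R : ℝ} {w : ℕ → ℂ}
    {A : Matrix (Fin N) (Fin N) ℂ} (F : Fin N → Fin N → ℂ → ℂ)
    (hA : ∀ i j, A i j = (2 * (Real.pi : ℂ) * I)⁻¹ *
      ∮ ζ in C(c, R), (∏ k ∈ Icc 1 j.1, (ζ - w k)) / (∏ k ∈ Icc 1 (i.1 + 1), (ζ - w k)) * F i j ζ)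
    (hw : ∀ k ∈ Icc 1 N, w k ∈ ball c R) (hF : ∀ i j, DifferentiableOn ℂ (F i j) (closedBall c R))
    (hF_diag : ∀ i, F i i (w (i.1 + 1)) = 1) :
    (∀ i j, i < j → A i j = 0) ∧ (∀ i, A i i = 1) ∧ A.det = 1 := by
  have hw' (i : Fin N) : ∀ k ∈ Icc 1 (i.1 + 1), w k ∈ ball c R :=
    fun k hk ↦ hw k (Icc_subset_Icc_right i.2 hk)
  have hA_upper (i j : Fin N) (hij : i < j) : A i j = 0 := by
    rw [hA, circleIntegral_prod_div_prod_mul_eq_zero hij (hw' i) (hF i j), mul_zero]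
  have hA_diag (i : Fin N) : A i i = 1 := by
    rw [hA, two_pi_I_inv_mul_circleIntegral_prod_div_prod_mul i.1 (hw' i) (hF i i), hF_diag]
  refine ⟨hA_upper, hA_diag, ?_⟩
  rw [det_of_isLowerTriangular A hA_upper]
  simp only [hA_diag, prod_const_one]

noncomputable def contourWeight (β : ℂ) (e : ℤ) (α : ℕ → ℂ) (s : Finset ℕ) (ζ : ℂ) : ℂ :=
  (β * ζ) ^ e * ∏ k ∈ s, (1 - α k / ζ) / (1 - α k * β)

section ContourWeight

variable {β : ℂ} {e : ℤ} {α : ℕ → ℂ} {s : Finset ℕ}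

theorem differentiableOn_contourWeight (hβ : β ≠ 0) {U : Set ℂ} (hU : 0 ∉ U) :
    DifferentiableOn ℂ (contourWeight β e α s) U := by
  have hζ : ∀ ζ ∈ U, ζ ≠ 0 := fun ζ hζ h0 ↦ hU (h0 ▸ hζ)
  refine DifferentiableOn.mul ?_ (.fun_finsetProd fun k _ ↦ ?_)
  · exact (differentiableOn_id.const_mul β).zpow (.inl fun ζ hζU ↦ mul_ne_zero hβ (hζ ζ hζU))
  · exact ((differentiableOn_const 1).sub
      ((differentiableOn_const (α k)).div differentiableOn_id hζ)).div_const _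

theorem contourWeight_inv_self (hβ : β ≠ 0) (hα : ∀ k ∈ s, 1 - α k * β ≠ 0) :
    contourWeight β e α s β⁻¹ = 1 := by
  rw [contourWeight, mul_inv_cancel₀ hβ, one_zpow, one_mul]
  exact prod_eq_one fun k hk ↦ by rw [div_inv_eq_mul, div_self (hα k hk)]

end ContourWeight

theorem orthogonalizing_matrices_triangular_general
    (N M : ℕ)
    (m : ℕ) (hmM : m < M)
    (h H : ℤ)
    (a b : ℕ → ℝ)
    (hb : ∀ j, 1 ≤ j → j ≤ N → 0 < b j ∧ b j ≤ 1)
    (hab : ∀ i j, 1 ≤ i → i ≤ M → 1 ≤ j → j ≤ N → 0 < a i * b j ∧ a i * b j < 1)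
    -- the contour `γ_b`: a circle of center `cb` and radius `rb` encircling all points
    -- `1/b_k` and none of the points `0, a_1, …, a_M`
    (cb : ℂ) (rb : ℝ)
    (hγb_in : ∀ k, 1 ≤ k → k ≤ N → ‖((b k : ℂ))⁻¹ - cb‖ < rb)
    (hγb_out0 : rb < ‖cb‖) :
    ∀ A B : Matrix (Fin N) (Fin N) ℂ,
      (A = Matrix.of fun i j : Fin N =>
        (2 * (Real.pi : ℂ) * Complex.I)⁻¹ *
          ∮ ζ in C(cb, rb),
            ((∏ k ∈ Finset.Icc 1 j.1, (ζ - ((b k : ℂ))⁻¹))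
                / ∏ k ∈ Finset.Icc 1 (i.1 + 1), (ζ - ((b k : ℂ))⁻¹))
              * ((b (j.1 + 1) : ℂ) * ζ) ^ (1 - h)
              * ∏ k ∈ Finset.Icc 1 m,
                  ((1 - (a k : ℂ) / ζ) / (1 - (a k : ℂ) * (b (j.1 + 1) : ℂ)))) →
      (B = Matrix.of fun i j : Fin N =>
        (2 * (Real.pi : ℂ) * Complex.I)⁻¹ *
          ∮ ω in C(cb, rb),
            ((∏ k ∈ Finset.Icc 1 j.1, (ω - ((b k : ℂ))⁻¹))
                / ∏ k ∈ Finset.Icc 1 (i.1 + 1), (ω - ((b k : ℂ))⁻¹))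
              * ((b (i.1 + 1) : ℂ) * ω) ^ (h - H)
              * ∏ k ∈ Finset.Icc (m + 1) M,
                  ((1 - (a k : ℂ) / ω) / (1 - (a k : ℂ) * (b (i.1 + 1) : ℂ)))) →
      ((∀ i j : Fin N, i < j → A i j = 0) ∧ (∀ i : Fin N, A i i = 1)
        ∧ (∀ i j : Fin N, i < j → B i j = 0) ∧ (∀ i : Fin N, B i i = 1)
        ∧ Matrix.det A = 1 ∧ Matrix.det B = 1) := by
  intro A B hA hB
  have h0 : (0 : ℂ) ∉ closedBall cb rb := by
    simpa [dist_comm, dist_eq] using hγb_out0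
  have hnodes : ∀ k ∈ Icc 1 N, ((b k : ℂ))⁻¹ ∈ ball cb rb := fun k hk ↦ by
    rw [mem_Icc] at hk
    simpa [dist_eq] using hγb_in k hk.1 hk.2
  have hb0 (j : Fin N) : (b (j.1 + 1) : ℂ) ≠ 0 :=
    ofReal_ne_zero.2 (hb _ j.1.succ_pos j.2).1.ne'
  have hab1 (k : ℕ) (hk : k ∈ Icc 1 M) (j : Fin N) : 1 - (a k : ℂ) * b (j.1 + 1) ≠ 0 := by
    rw [mem_Icc] at hk
    exact_mod_cast (sub_pos.2 (hab k _ hk.1 hk.2 j.1.succ_pos j.2).2).ne'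
  obtain ⟨hA_upper, hA_diag, hA_det⟩ := Matrix.unitLowerTriangular_of_eq_circleIntegral (A := A)
    (fun _ j ↦ contourWeight (b (j.1 + 1)) (1 - h) (fun k ↦ a k) (Icc 1 m))
    (fun i j ↦ by rw [hA]; simp only [Matrix.of_apply, contourWeight, mul_assoc]) hnodes
    (fun _ j ↦ differentiableOn_contourWeight (hb0 j) h0)
    (fun i ↦ contourWeight_inv_self (hb0 i) fun k hk ↦
      hab1 k (Icc_subset_Icc_right hmM.le hk) i)
  obtain ⟨hB_upper, hB_diag, hB_det⟩ := Matrix.unitLowerTriangular_of_eq_circleIntegral (A := B)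
    (fun i _ ↦ contourWeight (b (i.1 + 1)) (h - H) (fun k ↦ a k) (Icc (m + 1) M))
    (fun i j ↦ by rw [hB]; simp only [Matrix.of_apply, contourWeight, mul_assoc]) hnodes
    (fun i _ ↦ differentiableOn_contourWeight (hb0 i) h0)
    (fun i ↦ contourWeight_inv_self (hb0 i) fun k hk ↦
      hab1 k (Icc_subset_Icc_left m.succ_pos hk) i)
  exact ⟨hA_upper, hA_diag, hB_upper, hB_diag, hA_det, hB_det⟩

/-- The orthogonalizing matrices `A` and `B` are lower triangular with unit diagonal,
hence have determinant 1. -/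
theorem orthogonalizing_matrices_triangular
    (N M : ℕ) (hN : 1 ≤ N) (hM : 1 ≤ M)
    (m : ℕ) (hm : 0 < m) (hmM : m < M)
    (h H : ℤ)
    (a b : ℕ → ℝ)
    (ha : ∀ i, 1 ≤ i → i ≤ M → 0 ≤ a i ∧ a i ≤ 1)
    (hb : ∀ j, 1 ≤ j → j ≤ N → 0 < b j ∧ b j ≤ 1)
    (hab : ∀ i j, 1 ≤ i → i ≤ M → 1 ≤ j → j ≤ N → 0 < a i * b j ∧ a i * b j < 1)
    -- the contour `γ_b`: a circle of center `cb` and radius `rb` encircling all points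
    -- `1/b_k` and none of the points `0, a_1, …, a_M`
    (cb : ℂ) (rb : ℝ) (hrb : 0 < rb)
    (hγb_in : ∀ k, 1 ≤ k → k ≤ N → ‖((b k : ℂ))⁻¹ - cb‖ < rb)
    (hγb_out0 : rb < ‖cb‖)
    (hγb_outa : ∀ k, 1 ≤ k → k ≤ M → rb < ‖(a k : ℂ) - cb‖) :
    ∀ A B : Matrix (Fin N) (Fin N) ℂ,
      (A = Matrix.of fun i j : Fin N =>
        (2 * (Real.pi : ℂ) * Complex.I)⁻¹ *
          ∮ ζ in C(cb, rb),
            ((∏ k ∈ Finset.Icc 1 j.1, (ζ - ((b k : ℂ))⁻¹))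
                / ∏ k ∈ Finset.Icc 1 (i.1 + 1), (ζ - ((b k : ℂ))⁻¹))
              * ((b (j.1 + 1) : ℂ) * ζ) ^ (1 - h)
              * ∏ k ∈ Finset.Icc 1 m,
                  ((1 - (a k : ℂ) / ζ) / (1 - (a k : ℂ) * (b (j.1 + 1) : ℂ)))) →
      (B = Matrix.of fun i j : Fin N =>
        (2 * (Real.pi : ℂ) * Complex.I)⁻¹ *
          ∮ ω in C(cb, rb),
            ((∏ k ∈ Finset.Icc 1 j.1, (ω - ((b k : ℂ))⁻¹))
                / ∏ k ∈ Finset.Icc 1 (i.1 + 1), (ω - ((b k : ℂ))⁻¹))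
              * ((b (i.1 + 1) : ℂ) * ω) ^ (h - H)
              * ∏ k ∈ Finset.Icc (m + 1) M,
                  ((1 - (a k : ℂ) / ω) / (1 - (a k : ℂ) * (b (i.1 + 1) : ℂ)))) →
      ((∀ i j : Fin N, i < j → A i j = 0) ∧ (∀ i : Fin N, A i i = 1)
        ∧ (∀ i j : Fin N, i < j → B i j = 0) ∧ (∀ i : Fin N, B i i = 1)
        ∧ Matrix.det A = 1 ∧ Matrix.det B = 1) :=
  orthogonalizing_matrices_triangular_general N M m hmM h H a b hb hab cb rb hγb_in hγb_out0
end
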